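/- arXiv:1906.09855 — 8 statements merged into one kernel-verified Lean document; each statement's English description precedes it below -/
import Mathlib

section
/- Let μ̄ be a probability measure on X × Y, where (X, ρ, μ) is a metric probability space with marginal μ and Y is a countable label set. For any ν > 0 there exists β = β(ν) > 0 with the following property. Let V = {V_1, V_2, …} be any countable measurable partition of X and T ⊆ X any measurable set satisfying (i) μ(X ∖ T) ≤ ν and (ii) diam(V ∩ T) ≤ β for every cell V ∈ V. Let h : X → Y be any classifier that is constant on each cell of V and whose value on each cell V with μ(V ∩ T) > 0 is a label y maximizing P(Y = y | X ∈ V ∩ T). Then err_{μ̄}(h) ≤ R*_{μ̄} + 5ν. -/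
/-!
Pick a measurable classifier `f` within `ν` of the Bayes risk. Since `f` takes countably many
values, Lusin's theorem gives a measurable set `K` with `μ Kᶜ ≤ ν` and a scale `δ > 0` such that
`f` is constant on every subset of `K` of diameter `< δ`; take `β < δ`. On each cell `V`, `f` is
then a constant `y` on `V ∩ T ∩ K`, and the majority label of `V ∩ T` errs there no more often
than `y`, whose errors on `V ∩ T` lie in `Kᶜ` or among those of `f`. Summing over the cells gives
`err h ≤ μ Tᶜ + μ Kᶜ + err f ≤ R* + 3ν`.
-/

open MeasureTheory Metric Filter Topology Set Function
open scoped ENNReal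

theorem tsum_measure_inter_eq {α ι : Type*} [MeasurableSpace α] [Countable ι] (μ : Measure α)
    {s : ι → Set α} (hs : ∀ i, MeasurableSet (s i)) (hd : Pairwise (Disjoint on s))
    (hu : ⋃ i, s i = univ) {t : Set α} (ht : MeasurableSet t) :
    ∑' i, μ (t ∩ s i) = μ t :=
  calc ∑' i, μ (t ∩ s i) = μ (⋃ i, t ∩ s i) :=
        (measure_iUnion (fun i j hij => (hd hij).mono inter_subset_right inter_subset_right)
          (fun i => ht.inter (hs i))).symm
    _ = μ t := by rw [← inter_iUnion, hu, inter_univ]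

theorem measure_le_tsum_inter {α ι : Type*} [MeasurableSpace α] [Countable ι] (μ : Measure α)
    {s : ι → Set α} (hu : ⋃ i, s i = univ) (t : Set α) :
    μ t ≤ ∑' i, μ (t ∩ s i) :=
  calc μ t = μ (⋃ i, t ∩ s i) := by rw [← inter_iUnion, hu, inter_univ]
    _ ≤ ∑' i, μ (t ∩ s i) := measure_iUnion_le _

section LocallyConstant

variable {X Y : Type*} [MeasurableSpace X] [MeasurableSpace Y] [MeasurableSingletonClass Y]
  [Countable Y] (μ : Measure X) [IsFiniteMeasure μ] {f : X → Y}

/-- Lusin's theorem for a countably-valued `f`. -/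
theorem Measurable.exists_isClosed_measure_compl_le_eventually_eq [TopologicalSpace X]
    [OpensMeasurableSpace X] [μ.WeaklyRegular] (hf : Measurable f)
    {ε : ℝ≥0∞} (hε : ε ≠ 0) :
    ∃ F, IsClosed F ∧ μ Fᶜ ≤ ε ∧ ∀ x ∈ F, ∀ᶠ x' in 𝓝[F] x, f x' = f x := by
  classical
  obtain ⟨s, hs⟩ : ∃ s : Finset Y, μ (f ⁻¹' (↑s)ᶜ) ≤ ε / 2 := by
    have hlim := tendsto_measure_iInter_atTop (μ := μ) (s := fun s : Finset Y => f ⁻¹' (↑s)ᶜ)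
      (fun s => (hf s.finite_toSet.measurableSet.compl).nullMeasurableSet)
      (fun s t hst => preimage_mono (compl_subset_compl.2 (Finset.coe_subset.2 hst)))
      ⟨∅, measure_ne_top _ _⟩
    have hempty : ⋂ s : Finset Y, f ⁻¹' (↑s)ᶜ = ∅ :=
      eq_empty_of_forall_notMem fun x hx => mem_iInter.1 hx {f x} (by simp)
    rw [hempty, measure_empty] at hlim
    exact (hlim.eventually (eventually_le_nhds (ENNReal.half_pos hε))).exists
  obtain ⟨ε', hε'pos, hε'sum⟩ := ENNReal.exists_pos_sum_of_countable (ENNReal.half_pos hε).ne' Y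
  choose C hCf hC hCμ using fun y => (hf (measurableSet_singleton y)).exists_isClosed_sdiff_lt
    (measure_ne_top μ _) (ENNReal.coe_ne_zero.2 (hε'pos y).ne')
  refine ⟨⋃ y ∈ s, C y, isClosed_biUnion_finset fun y _ => hC y, ?_, ?_⟩
  · calc μ (⋃ y ∈ s, C y)ᶜ ≤ μ (f ⁻¹' (↑s)ᶜ ∪ ⋃ y, f ⁻¹' {y} \ C y) := by
          refine measure_mono fun x hx => ?_
          by_cases hxs : f x ∈ s
          · exact Or.inr (mem_iUnion.2 ⟨f x, rfl, fun hxC => hx (mem_biUnion hxs hxC)⟩)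
          · exact Or.inl hxs
      _ ≤ ε / 2 + ∑' y, (ε' y : ℝ≥0∞) :=
          (measure_union_le _ _).trans (add_le_add hs
            ((measure_iUnion_le _).trans (ENNReal.tsum_le_tsum fun y => (hCμ y).le)))
      _ ≤ ε := by
          calc _ ≤ ε / 2 + ε / 2 := by gcongr
            _ = ε := ENNReal.add_halves ε
  · intro x hx
    obtain ⟨y, hys, hxy⟩ := mem_iUnion₂.1 hx
    have hfx : f x = y := hCf y hxy
    have hfar : (⋃ z ∈ s.erase y, C z)ᶜ ∈ 𝓝 x := by
      refine (isClosed_biUnion_finset fun z _ => hC z).isOpen_compl.mem_nhds fun hx' => ?_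
      obtain ⟨z, hz, hxz⟩ := mem_iUnion₂.1 hx'
      exact Finset.ne_of_mem_erase hz (hfx.symm.trans (hCf z hxz : f x = z)).symm
    filter_upwards [mem_nhdsWithin_of_mem_nhds hfar, self_mem_nhdsWithin] with x' hx'far hx'
    obtain ⟨z, hzs, hx'z⟩ := mem_iUnion₂.1 hx'
    obtain rfl : z = y := by
      by_contra hzy
      exact hx'far (mem_biUnion (Finset.mem_erase.2 ⟨hzy, hzs⟩) hx'z)
    rw [hCf z hx'z, hfx]

theorem exists_measure_diff_le_forall_edist_lt_imp_eq [PseudoEMetricSpace X]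
    [OpensMeasurableSpace X] {F : Set X} (hF : MeasurableSet F)
    (hf : Measurable f) (hloc : ∀ x ∈ F, ∀ᶠ x' in 𝓝[F] x, f x' = f x) {ε : ℝ≥0∞} (hε : ε ≠ 0) :
    ∃ K ⊆ F, MeasurableSet K ∧ μ (F \ K) ≤ ε ∧
      ∃ δ > 0, ∀ x ∈ K, ∀ x' ∈ F, edist x x' < δ → f x' = f x := by
  set K : ℕ → Set X := fun n => {x ∈ F | (n : ℝ≥0∞)⁻¹ ≤ infEDist x (F \ f ⁻¹' {f x})}
  have hK : ∀ n, MeasurableSet (K n) := by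
    intro n
    have hKeq : K n = F ∩ ⋃ y, f ⁻¹' {y} ∩ {x | (n : ℝ≥0∞)⁻¹ ≤ infEDist x (F \ f ⁻¹' {y})} := by
      ext x
      simp [K]
    rw [hKeq]
    exact hF.inter (.iUnion fun y => (hf (measurableSet_singleton y)).inter
      (measurableSet_le measurable_const measurable_infEDist))
  have hlim := tendsto_measure_iInter_atTop (μ := μ) (s := fun n => F \ K n)
    (fun n => (hF.diff (hK n)).nullMeasurableSet)
    (fun m n hmn => sdiff_subset_sdiff_right fun x hx => ⟨hx.1, le_trans (by gcongr) hx.2⟩)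
    ⟨0, measure_ne_top _ _⟩
  have hempty : ⋂ n, F \ K n = ∅ := by
    refine eq_empty_of_forall_notMem fun x hx => ?_
    have hxF := (mem_iInter.1 hx 0).1
    obtain ⟨r, hr, hball⟩ := EMetric.mem_nhdsWithin_iff.1 (hloc x hxF)
    have hr_le : r ≤ infEDist x (F \ f ⁻¹' {f x}) := le_infEDist.2 fun x' hx' =>
      not_lt.1 fun hlt => hx'.2 (hball ⟨by rwa [mem_eball, edist_comm], hx'.1⟩)
    obtain ⟨n, hn⟩ := ENNReal.exists_inv_nat_lt hr.ne'
    exact (mem_iInter.1 hx n).2 ⟨hxF, hn.le.trans hr_le⟩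
  rw [hempty, measure_empty] at hlim
  obtain ⟨n, hn⟩ := (hlim.eventually (eventually_le_nhds (pos_iff_ne_zero.2 hε))).exists
  refine ⟨K n, fun x hx => hx.1, hK n, hn, (n : ℝ≥0∞)⁻¹,
    ENNReal.inv_pos.2 (ENNReal.natCast_ne_top n), fun x hx x' hx' hxx' => ?_⟩
  by_contra hne
  exact (hx.2.trans (infEDist_le_edist_of_mem ⟨hx', hne⟩)).not_gt hxx'

theorem exists_measure_compl_le_forall_edist_lt_imp_eq [PseudoEMetricSpace X]
    [OpensMeasurableSpace X] [μ.WeaklyRegular] (hf : Measurable f) {ε : ℝ≥0∞} (hε : ε ≠ 0) :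
    ∃ K, MeasurableSet K ∧ μ Kᶜ ≤ ε ∧
      ∃ δ > 0, ∀ x ∈ K, ∀ x' ∈ K, edist x x' < δ → f x = f x' := by
  obtain ⟨F, hF, hFμ, hloc⟩ :=
    hf.exists_isClosed_measure_compl_le_eventually_eq μ (ENNReal.half_pos hε).ne'
  obtain ⟨K, hKF, hK, hKμ, δ, hδ, hKδ⟩ := exists_measure_diff_le_forall_edist_lt_imp_eq μ
    hF.measurableSet hf hloc (ENNReal.half_pos hε).ne'
  refine ⟨K, hK, ?_, δ, hδ, fun x hx x' hx' hxx' => (hKδ x hx x' (hKF hx') hxx').symm⟩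
  calc μ Kᶜ ≤ μ (Fᶜ ∪ F \ K) := measure_mono fun x hx => by
        by_cases hxF : x ∈ F
        exacts [Or.inr ⟨hxF, hx⟩, Or.inl hxF]
    _ ≤ ε / 2 + ε / 2 := (measure_union_le _ _).trans (add_le_add hFμ hKμ)
    _ = ε := ENNReal.add_halves ε

end LocallyConstant

section Majority

variable {X Y : Type*} [MeasurableSpace X] [MeasurableSpace Y] [MeasurableSingletonClass Y]
  (μ : Measure (X × Y)) [IsFiniteMeasure μ]

theorem measure_prod_compl_singleton_le_of_le {A : Set X} (hA : MeasurableSet A) {c y : Y}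
    (hyc : μ (A ×ˢ {y}) ≤ μ (A ×ˢ {c})) : μ (A ×ˢ {c}ᶜ) ≤ μ (A ×ˢ {y}ᶜ) := by
  have hcompl : ∀ z : Y, μ (A ×ˢ {z}ᶜ) = μ (A ×ˢ univ) - μ (A ×ˢ {z}) := fun z => by
    rw [← measure_sdiff (prod_mono_right (subset_univ _))
      (hA.prod (measurableSet_singleton z)).nullMeasurableSet (measure_ne_top _ _),
      prod_sdiff_prod, sdiff_self, empty_prod, union_empty, compl_eq_univ_sdiff]
  rw [hcompl, hcompl]
  exact tsub_le_tsub_left hyc _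

theorem measure_prod_compl_le_of_majority {A K : Set X} (hA : MeasurableSet A) {c : Y}
    (hmaj : 0 < μ (Prod.fst ⁻¹' A) → ∀ y, μ (A ×ˢ {y}) ≤ μ (A ×ˢ {c})) {f : X → Y}
    (hf : ∀ x ∈ A ∩ K, ∀ x' ∈ A ∩ K, f x = f x') :
    μ (A ×ˢ {c}ᶜ) ≤ μ (Prod.fst ⁻¹' (A \ K)) + μ ({p | f p.1 ≠ p.2} ∩ Prod.fst ⁻¹' A) := by
  rcases eq_zero_or_pos (μ (Prod.fst ⁻¹' A)) with hA0 | hApos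
  · rw [measure_mono_null (fun p hp => hp.1) hA0]
    positivity
  obtain ⟨y, hy⟩ : ∃ y, ∀ x ∈ A ∩ K, f x = y := by
    rcases (A ∩ K).eq_empty_or_nonempty with hAK | ⟨x₁, hx₁⟩
    · exact ⟨c, by simp [hAK]⟩
    · exact ⟨f x₁, fun x hx => hf x hx x₁ hx₁⟩
  calc μ (A ×ˢ {c}ᶜ) ≤ μ (A ×ˢ {y}ᶜ) := measure_prod_compl_singleton_le_of_le μ hA (hmaj hApos y)
    _ ≤ μ (Prod.fst ⁻¹' (A \ K) ∪ {p | f p.1 ≠ p.2} ∩ Prod.fst ⁻¹' A) := by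
        refine measure_mono fun p ⟨hpA, hpy⟩ => ?_
        by_cases hpK : p.1 ∈ K
        · refine Or.inr ⟨?_, hpA⟩
          rw [mem_ofPred_eq, hy p.1 ⟨hpA, hpK⟩]
          exact Ne.symm hpy
        · exact Or.inl ⟨hpA, hpK⟩
    _ ≤ _ := measure_union_le _ _

theorem measure_ne_inter_preimage_le {V T K : Set X} (hV : MeasurableSet V) (hT : MeasurableSet T)
    {h f : X → Y} (hh : ∀ x ∈ V, ∀ x' ∈ V, h x = h x')
    (hmaj : 0 < μ.map Prod.fst (V ∩ T) →
      ∀ x ∈ V, ∀ y, μ ((V ∩ T) ×ˢ {y}) ≤ μ ((V ∩ T) ×ˢ {h x}))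
    (hf : ∀ x ∈ V ∩ T ∩ K, ∀ x' ∈ V ∩ T ∩ K, f x = f x') :
    μ ({p | h p.1 ≠ p.2} ∩ Prod.fst ⁻¹' V) ≤
      μ (Prod.fst ⁻¹' Tᶜ ∩ Prod.fst ⁻¹' V) + μ (Prod.fst ⁻¹' Kᶜ ∩ Prod.fst ⁻¹' V) +
        μ ({p | f p.1 ≠ p.2} ∩ Prod.fst ⁻¹' V) := by
  rcases V.eq_empty_or_nonempty with rfl | ⟨x₀, hx₀⟩
  · simp
  have hVT := hV.inter hT
  have hmaj₀ := fun hpos y =>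
    hmaj (by rwa [Measure.map_apply measurable_fst hVT]) x₀ hx₀ y
  calc μ ({p | h p.1 ≠ p.2} ∩ Prod.fst ⁻¹' V)
      ≤ μ (Prod.fst ⁻¹' Tᶜ ∩ Prod.fst ⁻¹' V ∪ (V ∩ T) ×ˢ {h x₀}ᶜ) := by
        refine measure_mono fun p ⟨hp, hpV⟩ => ?_
        by_cases hpT : p.1 ∈ T
        · refine Or.inr ⟨⟨hpV, hpT⟩, fun hc => hp ?_⟩
          rw [hh p.1 hpV x₀ hx₀, mem_singleton_iff.1 hc]
        · exact Or.inl ⟨hpT, hpV⟩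
    _ ≤ μ (Prod.fst ⁻¹' Tᶜ ∩ Prod.fst ⁻¹' V) + (μ (Prod.fst ⁻¹' ((V ∩ T) \ K)) +
          μ ({p | f p.1 ≠ p.2} ∩ Prod.fst ⁻¹' (V ∩ T))) :=
        (measure_union_le _ _).trans
          (add_le_add le_rfl (measure_prod_compl_le_of_majority μ hVT hmaj₀ hf))
    _ ≤ _ := by
        rw [add_assoc]
        exact add_le_add le_rfl (add_le_add (measure_mono fun p hp => ⟨hp.2, hp.1.1⟩)
          (measure_mono fun p hp => ⟨hp.1, hp.2.1⟩))

theorem measure_ne_le_of_majority_vote [Countable Y] {V : ℕ → Set X}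
    (hV : ∀ i, MeasurableSet (V i)) (hVd : Pairwise (Disjoint on V)) (hVu : ⋃ i, V i = univ)
    {T K : Set X} (hT : MeasurableSet T) (hK : MeasurableSet K) {h f : X → Y}
    (hf : Measurable f) (hh : ∀ i, ∀ x ∈ V i, ∀ x' ∈ V i, h x = h x')
    (hmaj : ∀ i, 0 < μ.map Prod.fst (V i ∩ T) →
      ∀ x ∈ V i, ∀ y, μ ((V i ∩ T) ×ˢ {y}) ≤ μ ((V i ∩ T) ×ˢ {h x}))
    (hfK : ∀ i, ∀ x ∈ V i ∩ T ∩ K, ∀ x' ∈ V i ∩ T ∩ K, f x = f x') :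
    μ {p | h p.1 ≠ p.2} ≤
      μ.map Prod.fst Tᶜ + μ.map Prod.fst Kᶜ + μ {p | f p.1 ≠ p.2} := by
  have hVu' : ⋃ i, Prod.fst ⁻¹' V i = (univ : Set (X × Y)) := by
    rw [← preimage_iUnion, hVu, preimage_univ]
  have hsum : ∀ t, MeasurableSet t → ∑' i, μ (t ∩ Prod.fst ⁻¹' V i) = μ t := fun _ =>
    tsum_measure_inter_eq μ (fun i => measurable_fst (hV i))
      (fun i j hij => (hVd hij).preimage Prod.fst) hVu'
  have herr : MeasurableSet {p : X × Y | f p.1 ≠ p.2} :=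
    (measurableSet_eq_fun (hf.comp measurable_fst) measurable_snd).compl
  calc μ {p | h p.1 ≠ p.2} ≤ ∑' i, μ ({p | h p.1 ≠ p.2} ∩ Prod.fst ⁻¹' V i) :=
        measure_le_tsum_inter μ hVu' _
    _ ≤ _ := ENNReal.tsum_le_tsum fun i =>
        measure_ne_inter_preimage_le μ (hV i) hT (hh i) (hmaj i) (hfK i)
    _ = _ := by
        rw [ENNReal.tsum_add, ENNReal.tsum_add, hsum _ (measurable_fst hT.compl),
          hsum _ (measurable_fst hK.compl), hsum _ herr,
          Measure.map_apply measurable_fst hT.compl, Measure.map_apply measurable_fst hK.compl]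

end Majority

/-- **True majority votes on fine partitions approach the Bayes risk.** Let `μ̄` be a
probability measure on `X × Y` with `(X, ρ)` a metric space, marginal `μ` on `X`, and
`Y` a countable label set. For every `ν > 0` there is `β > 0` such that: for every
countable measurable partition `V` of `X` and measurable `T ⊆ X` with
`μ(X ∖ T) ≤ ν` and `diam(V ∩ T) ≤ β` for each cell `V`, every classifier `h` constant
on the cells of `V` whose value on each cell `V` with `μ(V ∩ T) > 0` maximizes
`P(Y = y | X ∈ V ∩ T)` satisfies `err(h) ≤ R* + 5ν`. -/
theorem true_majority_vote_near_bayes {X Y : Type*} [MetricSpace X] [MeasurableSpace X]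
    [BorelSpace X] [Countable Y] [MeasurableSpace Y] [MeasurableSingletonClass Y]
    (μbar : Measure (X × Y)) [IsProbabilityMeasure μbar]
    (ν : ℝ) (hν : 0 < ν) :
    ∃ β : ℝ, 0 < β ∧
      ∀ V : ℕ → Set X, (∀ i, MeasurableSet (V i)) →
        Pairwise (Function.onFun Disjoint V) → (⋃ i, V i) = Set.univ →
      ∀ T : Set X, MeasurableSet T →
        μbar.map Prod.fst Tᶜ ≤ ENNReal.ofReal ν →
        (∀ i, EMetric.diam (V i ∩ T) ≤ ENNReal.ofReal β) →
      ∀ h : X → Y,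
        (∀ i, ∀ x ∈ V i, ∀ x' ∈ V i, h x = h x') →
        (∀ i, 0 < μbar.map Prod.fst (V i ∩ T) →
          ∀ x ∈ V i, ∀ y : Y,
            μbar ((V i ∩ T) ×ˢ ({y} : Set Y)) ≤ μbar ((V i ∩ T) ×ˢ ({h x} : Set Y))) →
        μbar {p : X × Y | h p.1 ≠ p.2} ≤
          (⨅ (f : X → Y) (_ : Measurable f), μbar {p : X × Y | f p.1 ≠ p.2})
            + ENNReal.ofReal (5 * ν) := by
  set R := ⨅ (f : X → Y) (_ : Measurable f), μbar {p : X × Y | f p.1 ≠ p.2}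
  have hν₀ : ENNReal.ofReal ν ≠ 0 := (ENNReal.ofReal_pos.2 hν).ne'
  rcases eq_or_ne R ⊤ with hR | hR
  · exact ⟨1, one_pos, fun _ _ _ _ _ _ _ _ _ _ _ => by simp [hR]⟩
  obtain ⟨f, hf, hfR⟩ : ∃ f : X → Y, Measurable f ∧ μbar {p | f p.1 ≠ p.2} < R + ENNReal.ofReal ν :=
    by simpa only [R, iInf_lt_iff, exists_prop] using ENNReal.lt_add_right hR hν₀
  obtain ⟨K, hK, hKν, δ, hδ, hKδ⟩ :=
    exists_measure_compl_le_forall_edist_lt_imp_eq (μbar.map Prod.fst) hf hν₀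
  obtain ⟨β, -, hβ, hβδ⟩ := ENNReal.lt_iff_exists_real_btwn.1 hδ
  refine ⟨β, ENNReal.ofReal_pos.1 hβ, fun V hV hVd hVu T hT hTν hdiam h hh hmaj => ?_⟩
  have hfK : ∀ i, ∀ x ∈ V i ∩ T ∩ K, ∀ x' ∈ V i ∩ T ∩ K, f x = f x' := fun i x hx x' hx' =>
    hKδ x hx.2 x' hx'.2 (((edist_le_ediam_of_mem hx.1 hx'.1).trans (hdiam i)).trans_lt hβδ)
  calc μbar {p | h p.1 ≠ p.2}
      ≤ μbar.map Prod.fst Tᶜ + μbar.map Prod.fst Kᶜ + μbar {p | f p.1 ≠ p.2} :=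
        measure_ne_le_of_majority_vote μbar hV hVd hVu hT hK hf hh hmaj hfK
    _ ≤ ENNReal.ofReal ν + ENNReal.ofReal ν + (R + ENNReal.ofReal ν) := by gcongr
    _ = R + 3 * ENNReal.ofReal ν := by ring
    _ ≤ R + ENNReal.ofReal (5 * ν) := by
        rw [ENNReal.ofReal_mul (by norm_num), ENNReal.ofReal_ofNat]
        gcongr
        norm_num
end

section
/- Let (X, ρ, μ) be a separable metric probability space and γ > 0. Then there exists a function t_γ : ℕ → ℝ₊ with t_γ(n)/n → 0 as n → ∞ such that, for X_1, …, X_n drawn i.i.d. from μ, P[ sup over all γ-nets N of {X_1, …, X_n} of 2|N| ≥ t_γ(n) ] ≤ 1/n². -/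
open MeasureTheory Filter Metric
open scoped ENNReal
open Finset

/-! Cover the full-measure separable set by balls `B(c k, γ/2)`. A `γ`-separated set has at most
one point in each ball, so a `γ`-net of the sample with at least `K + s` points forces at least `s`
sample points outside the first `K` balls, an event of probability at most `C(n, s) δ^s`, where `δ`
is the measure of the uncovered part. Taking `K ≈ √n` makes `δ → 0`, and then
`s ≈ n √δ + 2 log n = o(n)` gives `C(n, s) δ^s ≤ (e √δ)^s ≤ n⁻²`. -/

theorem exists_tendsto_measure_compl_biUnion_ball {X : Type*} [PseudoMetricSpace X]
    [MeasurableSpace X] [OpensMeasurableSpace X] [Nonempty X] (μ : Measure X) [IsFiniteMeasure μ]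
    {s : Set X} (hs : TopologicalSpace.IsSeparable s) (hμs : μ sᶜ = 0) {r : ℝ} (hr : 0 < r) :
    ∃ c : ℕ → X, Tendsto (fun K => μ (⋃ k ∈ range K, ball (c k) r)ᶜ) atTop (nhds 0) := by
  obtain ⟨t, htc, hst⟩ := hs
  obtain ⟨c, hc⟩ := (htc.insert (Classical.arbitrary X)).exists_eq_range (Set.insert_nonempty _ _)
  refine ⟨c, ?_⟩
  have hnull : μ (⋂ K, (⋃ k ∈ range K, ball (c k) r)ᶜ) = 0 := by
    refine measure_mono_null (t := sᶜ) (fun x hx hxs => ?_) hμs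
    have hx' : x ∈ closure (Set.range c) := closure_mono (hc ▸ Set.subset_insert _ _) (hst hxs)
    obtain ⟨k, hk⟩ := mem_closure_range_iff.1 hx' r hr
    exact Set.mem_iInter.1 hx (k + 1) (Set.mem_biUnion (by simp) hk)
  rw [← hnull]
  refine tendsto_measure_iInter_atTop (fun K => ?_) (fun K L hKL => ?_) ⟨0, measure_ne_top _ _⟩
  · exact (Finset.measurableSet_biUnion _ fun k _ => isOpen_ball.measurableSet).compl
      |>.nullMeasurableSet
  · exact Set.compl_subset_compl.2 (Set.biUnion_subset_biUnion_left (by simpa using hKL))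

theorem Finset.card_filter_le_card_filter_of_subset_range {X ι : Type*} [Fintype ι]
    {ω : ι → X} {N : Finset X} (hN : ↑N ⊆ Set.range ω) (p : X → Prop) [DecidablePred p] :
    #{a ∈ N | p a} ≤ #{i | p (ω i)} :=
  card_le_card_of_forall_subsingleton (fun a i => ω i = a)
    (fun a ha => by
      obtain ⟨haN, hpa⟩ := mem_filter.1 ha
      obtain ⟨i, rfl⟩ := hN haN
      exact ⟨i, by simpa using hpa, rfl⟩)
    (fun _ _ _ ha _ hb => ha.2.symm.trans hb.2)

theorem Finset.card_filter_mem_biUnion_ball_le {X : Type*} [PseudoMetricSpace X] {N : Finset X}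
    {γ r : ℝ} (hN : (N : Set X).Pairwise fun a b => γ ≤ dist a b) (hr : 2 * r ≤ γ)
    (c : ℕ → X) (K : ℕ) [DecidablePred (· ∈ ⋃ k ∈ range K, ball (c k) r)] :
    #{a ∈ N | a ∈ ⋃ k ∈ range K, ball (c k) r} ≤ K := by
  simpa using card_le_card_of_forall_subsingleton (fun a k => a ∈ ball (c k) r) (t := range K)
    (fun a ha => by simpa using (mem_filter.1 ha).2)
    (fun k _ a ha b hb => by
      by_contra hab
      have := (dist_triangle_right a b (c k)).trans_lt (add_lt_add ha.2 hb.2)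
      linarith [hN (mem_filter.1 ha.1).1 (mem_filter.1 hb.1).1 hab])

theorem Finset.card_le_add_card_filter_notMem_biUnion_ball {X ι : Type*} [PseudoMetricSpace X]
    [Fintype ι] {ω : ι → X} {N : Finset X} {γ r : ℝ}
    (hN : (N : Set X).Pairwise fun a b => γ ≤ dist a b) (hNω : ↑N ⊆ Set.range ω)
    (hr : 2 * r ≤ γ) (c : ℕ → X) (K : ℕ) [DecidablePred (· ∈ ⋃ k ∈ range K, ball (c k) r)] :
    #N ≤ K + #{i | ω i ∉ ⋃ k ∈ range K, ball (c k) r} :=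
  calc #N = #{a ∈ N | a ∈ ⋃ k ∈ range K, ball (c k) r}
        + #{a ∈ N | a ∉ ⋃ k ∈ range K, ball (c k) r} := (card_filter_add_card_filter_not _).symm
    _ ≤ K + #{i | ω i ∉ ⋃ k ∈ range K, ball (c k) r} :=
      add_le_add (card_filter_mem_biUnion_ball_le hN hr c K)
        (card_filter_le_card_filter_of_subset_range hNω _)

theorem measure_pi_le_card_filter_mem_le_choose_mul_pow {Ω ι : Type*} [MeasurableSpace Ω]
    [Fintype ι] (μ : Measure Ω) [IsProbabilityMeasure μ] (E : Set Ω) [DecidablePred (· ∈ E)] (s : ℕ) :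
    Measure.pi (fun _ : ι => μ) {ω | s ≤ #{i | ω i ∈ E}}
      ≤ (Fintype.card ι).choose s * μ E ^ s := by
  have hcover : {ω : ι → Ω | s ≤ #{i | ω i ∈ E}}
      ⊆ ⋃ S ∈ powersetCard s (univ : Finset ι), (S : Set ι).pi fun _ => E := by
    intro ω hω
    obtain ⟨S, hS, rfl⟩ := exists_subset_card_eq hω
    exact Set.mem_biUnion (mem_powersetCard.2 ⟨subset_univ S, rfl⟩)
      fun i hi => (mem_filter.1 (hS hi)).2
  calc _ ≤ ∑ S ∈ powersetCard s (univ : Finset ι),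
          Measure.pi (fun _ : ι => μ) ((S : Set ι).pi fun _ => E) :=
        (measure_mono hcover).trans (measure_biUnion_finset_le _ _)
    _ = (Fintype.card ι).choose s * μ E ^ s := by
        rw [sum_congr rfl fun S hS => by
          rw [Measure.pi_pi_finset, prod_const, (mem_powersetCard.1 hS).2]]
        simp

open Real in
theorem choose_mul_pow_le_exp_mul_sqrt_pow {n s : ℕ} {δ : ℝ} (hδ : 0 ≤ δ) (hs : n * √δ ≤ s) :
    (n.choose s : ℝ) * δ ^ s ≤ (exp 1 * √δ) ^ s :=
  calc (n.choose s : ℝ) * δ ^ s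
      ≤ n ^ s / s.factorial * δ ^ s := by gcongr; exact Nat.choose_le_pow_div s n
    _ = √δ ^ s * ((n * √δ) ^ s / s.factorial) := by
        conv_lhs => rw [← sq_sqrt hδ]
        ring
    _ ≤ √δ ^ s * (s ^ s / s.factorial) := by gcongr
    _ ≤ √δ ^ s * exp s := by gcongr; exact pow_div_factorial_le_exp (x := s) (Nat.cast_nonneg s) s
    _ = (exp 1 * √δ) ^ s := by rw [mul_pow, ← exp_nat_mul, mul_one, mul_comm]

open Real in
theorem choose_mul_pow_mul_sq_le_one {n s : ℕ} {δ : ℝ} (hδ : 0 ≤ δ) (hδ₂ : √δ ≤ exp (-2))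
    (hs₁ : n * √δ ≤ s) (hs₂ : 2 * log n ≤ s) : (n.choose s : ℝ) * δ ^ s * n ^ 2 ≤ 1 := by
  have hratio : exp 1 * √δ ≤ exp (-1) :=
    calc exp 1 * √δ ≤ exp 1 * exp (-2) := by gcongr
      _ = exp (-1) := by rw [← exp_add]; norm_num
  have hsq : (n : ℝ) ^ 2 ≤ exp s :=
    calc (n : ℝ) ^ 2 ≤ exp (log ((n : ℝ) ^ 2)) := le_exp_log _
      _ ≤ exp s := by rw [log_pow]; gcongr; exact_mod_cast hs₂
  calc (n.choose s : ℝ) * δ ^ s * n ^ 2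
      ≤ exp (-1) ^ s * exp s := by
        gcongr
        exact (choose_mul_pow_le_exp_mul_sqrt_pow hδ hs₁).trans (by gcongr)
    _ = 1 := by rw [← exp_nat_mul, ← exp_add]; simp

theorem tendsto_nat_sqrt_add_one_div :
    Tendsto (fun n : ℕ => ((n.sqrt + 1 : ℕ) : ℝ) / n) atTop (nhds 0) := by
  have h : Tendsto (fun n : ℕ => (√(n : ℝ))⁻¹ + 1 / n) atTop (nhds 0) := by
    simpa using (tendsto_inv_atTop_zero.comp
      (Real.tendsto_sqrt_atTop.comp tendsto_natCast_atTop_atTop)).add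
      tendsto_one_div_atTop_nhds_zero_nat
  refine squeeze_zero (fun n => by positivity) (fun n => ?_) h
  rw [Nat.cast_add, Nat.cast_one, add_div, ← Real.sqrt_div_self]
  gcongr
  exact Real.nat_sqrt_le_real_sqrt

open Real in
theorem exists_sublinear_choose_mul_pow_le {δ : ℕ → ℝ≥0∞} (hδ_top : ∀ n, δ n ≠ ∞)
    (hδ : Tendsto δ atTop (nhds 0)) :
    ∃ s : ℕ → ℕ, Tendsto (fun n => (s n : ℝ) / n) atTop (nhds 0) ∧
      ∀ n, (n.choose (s n) : ℝ≥0∞) * δ n ^ s n ≤ 1 / (n : ℝ≥0∞) ^ 2 := by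
  set d : ℕ → ℝ := fun n => (δ n).toReal
  have hd : Tendsto (fun n => √(d n)) atTop (nhds 0) := by
    have h := ((ENNReal.tendsto_toReal ENNReal.zero_ne_top).comp hδ).sqrt
    rwa [ENNReal.toReal_zero, Real.sqrt_zero] at h
  -- for the finitely many `n` where `δ n` is still large, `s n > n` makes the binomial vanish
  set s : ℕ → ℕ := fun n =>
    if √(d n) ≤ exp (-2) then ⌈n * √(d n) + 2 * log n⌉₊ else n + 1
  have hceil : ∀ n : ℕ, (n : ℝ) * √(d n) + 2 * log n ≤ ⌈n * √(d n) + 2 * log n⌉₊ :=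
    fun n => Nat.le_ceil _
  refine ⟨s, ?_, fun n => ?_⟩
  · have hlim : Tendsto (fun n : ℕ => √(d n) + 2 * (log n / n) + 1 / n) atTop (nhds 0) := by
      simpa using (hd.add (((isLittleO_log_id_atTop.tendsto_div_nhds_zero).comp
        tendsto_natCast_atTop_atTop).const_mul 2)).add tendsto_one_div_atTop_nhds_zero_nat
    refine squeeze_zero' (.of_forall fun n => by positivity) ?_ hlim
    filter_upwards [hd.eventually_le_const (exp_pos (-2)), eventually_gt_atTop 0] with n hn hn0
    have : (s n : ℝ) < n * √(d n) + 2 * log n + 1 := by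
      simp only [s, if_pos hn]
      exact Nat.ceil_lt_add_one (by positivity)
    rw [div_le_iff₀ (by positivity)]
    field_simp
    linarith
  · rw [ENNReal.le_div_iff_mul_le (.inr one_ne_zero) (.inr ENNReal.one_ne_top)]
    by_cases hn : √(d n) ≤ exp (-2)
    · have key := choose_mul_pow_mul_sq_le_one (n := n) (s := s n) ENNReal.toReal_nonneg hn
        (by simp only [s, if_pos hn]; linarith [hceil n, log_natCast_nonneg n])
        (by simp only [s, if_pos hn]; nlinarith [hceil n, Real.sqrt_nonneg (d n)])
      rw [← ENNReal.toReal_le_toReal (by have := hδ_top n; finiteness) ENNReal.one_ne_top]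
      simpa [d] using key
    · simp [s, hn]

/-- **Sublinear growth of `γ`-nets.** For a separable metric probability space and
`γ > 0`, there is a function `t_γ : ℕ → ℝ₊` with `t_γ(n)/n → 0` such that, for an
i.i.d. sample `X_1, …, X_n ∼ μ`, the probability that some `γ`-net `N` of
`{X_1, …, X_n}` (a maximal `γ`-separated subset) has `2|N| ≥ t_γ(n)` is at most
`1/n²`. -/
theorem gamma_net_sublinear {X : Type*} [MetricSpace X] [MeasurableSpace X] [BorelSpace X]
    (μ : Measure X) [IsProbabilityMeasure μ]
    (hsep : ∃ X' : Set X, MeasurableSet X' ∧ μ X' = 1 ∧ TopologicalSpace.IsSeparable X')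
    (γ : ℝ) (hγ : 0 < γ) :
    ∃ t : ℕ → ℝ, (∀ n, 0 < t n) ∧
      Tendsto (fun n : ℕ => t n / n) atTop (nhds 0) ∧
      ∀ n : ℕ,
        (Measure.pi fun _ : Fin n => μ)
            {ω : Fin n → X | ∃ N : Finset X,
              (↑N ⊆ Set.range ω) ∧
              (∀ a ∈ N, ∀ b ∈ N, a ≠ b → γ ≤ dist a b) ∧
              (∀ x ∈ Set.range ω, ∃ a ∈ N, dist x a < γ) ∧
              t n ≤ 2 * (N.card : ℝ)}
          ≤ 1 / (n : ℝ≥0∞) ^ 2 := by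
  classical
  have := nonempty_of_isProbabilityMeasure μ
  obtain ⟨X', hX'm, hX'1, hX'sep⟩ := hsep
  obtain ⟨c, hc⟩ := exists_tendsto_measure_compl_biUnion_ball μ hX'sep
    ((prob_compl_eq_zero_iff hX'm).2 hX'1) (half_pos hγ)
  set K : ℕ → ℕ := fun n => n.sqrt + 1
  set U : ℕ → Set X := fun n => (⋃ k ∈ range (K n), ball (c k) (γ / 2))ᶜ
  have hK : Tendsto K atTop atTop :=
    tendsto_atTop_atTop.2 fun b => ⟨b * b, fun n hn => (Nat.le_sqrt.2 hn).trans n.sqrt.le_succ⟩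
  obtain ⟨s, hs, hbound⟩ := exists_sublinear_choose_mul_pow_le (δ := fun n => μ (U n))
    (fun n => measure_ne_top _ _) (hc.comp hK)
  refine ⟨fun n => 2 * ((K n : ℝ) + s n), fun n => by positivity, ?_, fun n => ?_⟩
  · have h := (tendsto_nat_sqrt_add_one_div.add hs).const_mul 2
    rw [add_zero, mul_zero] at h
    refine h.congr fun n => ?_
    simp only [K]
    ring
  calc _ ≤ Measure.pi (fun _ : Fin n => μ) {ω | s n ≤ #{i | ω i ∈ U n}} := by
        refine measure_mono fun ω ⟨N, hNω, hNsep, _, hN⟩ => ?_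
        have hcard := card_le_add_card_filter_notMem_biUnion_ball (r := γ / 2) hNsep hNω
          (by linarith) c (K n)
        have hKs : K n + s n ≤ #N := by
          have : (K n : ℝ) + s n ≤ #N := by beta_reduce at hN; linarith
          exact_mod_cast this
        exact Nat.le_of_add_le_add_left (hKs.trans hcard)
    _ ≤ _ := measure_pi_le_card_filter_mem_le_choose_mul_pow μ (U n) (s n)
    _ ≤ _ := by simpa using hbound n
end

section
/- Let (X, ρ, μ) be a separable metric probability space and let γ > 0 be fixed. Define the γ-missing mass of a sample S_n = (X_1, …, X_n) as L_γ(S_n) = μ(X ∖ ⋃_{i=1}^n B_γ(X_i)), where B_γ(x) is the open ball of radius γ around x. Then there exists a function u_γ : ℕ → ℝ₊ with u_γ(n) → 0 as n → ∞ such that, for X_1, …, X_n drawn i.i.d. from μ and all t > 0, P[ L_γ(S_n) ≥ u_γ(n) + t ] ≤ exp(−n t²). -/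
open MeasureTheory Filter Metric
open scoped ENNReal

/-!
Cover most of the mass by finitely many balls `B_1, …, B_M` of radius `γ/2` (separability), with
union `F`. A point missed by the sample lies outside `F` or in a ball `B_j` containing no sample
point, since a sample point in `B_j` is within `γ` of it. For a fixed subfamily `G` of the balls,
the sample avoids `⋃ G` with probability `(1 - μ(⋃ G))ⁿ ≤ exp(-n μ(⋃ G))`, so a union bound over the
`2^M` subfamilies gives `P[L_γ ≥ μ(Fᶜ) + s] ≤ 2^M exp(-n s)`. Taking `s = M log 2 / n + t` and
minimising `μ(Fᶜ) + M log 2 / n` over `M` gives `u_γ(n) → 0`; finally `exp(-n t) ≤ exp(-n t²)` for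
`t ≤ 1`, while for `t > 1` the event is empty.
-/

open Classical in
noncomputable def missedCells {E ι : Type*} (J : Finset ι) (B : ι → Set E) {n : ℕ}
    (ω : Fin n → E) : Finset ι :=
  J.filter fun j => ∀ i, ω i ∉ B j

section Sampling

variable {E : Type*} [MeasurableSpace E] (μ : Measure E) [IsProbabilityMeasure μ]

theorem measure_pi_forall_notMem_le {A : Set E} (hA : MeasurableSet A) {s : ℝ} (hs : 0 ≤ s)
    (hsA : ENNReal.ofReal s ≤ μ A) (n : ℕ) :
    Measure.pi (fun _ : Fin n => μ) {ω | ∀ i, ω i ∉ A}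
      ≤ ENNReal.ofReal (Real.exp (-(n * s))) := by
  have hpi : {ω : Fin n → E | ∀ i, ω i ∉ A} = Set.univ.pi fun _ => Aᶜ := by
    ext ω; simp
  have hcompl : μ Aᶜ ≤ ENNReal.ofReal (Real.exp (-s)) :=
    calc μ Aᶜ = 1 - μ A := prob_compl_eq_one_sub hA
      _ ≤ 1 - ENNReal.ofReal s := tsub_le_tsub_left hsA 1
      _ = ENNReal.ofReal (1 - s) := by rw [ENNReal.ofReal_sub _ hs, ENNReal.ofReal_one]
      _ ≤ ENNReal.ofReal (Real.exp (-s)) := ENNReal.ofReal_le_ofReal (Real.one_sub_le_exp_neg s)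
  calc Measure.pi (fun _ : Fin n => μ) {ω | ∀ i, ω i ∉ A} = μ Aᶜ ^ n := by
        rw [hpi, Measure.pi_pi, Finset.prod_const, Finset.card_univ, Fintype.card_fin]
    _ ≤ ENNReal.ofReal (Real.exp (-s)) ^ n := by gcongr
    _ = ENNReal.ofReal (Real.exp (-(n * s))) := by
        rw [← ENNReal.ofReal_pow (Real.exp_nonneg _), ← Real.exp_nat_mul, mul_neg]

theorem measure_pi_missedCells_ge_le {ι : Type*} (J : Finset ι) {B : ι → Set E}
    (hB : ∀ j, MeasurableSet (B j)) (n : ℕ) {s : ℝ} (hs : 0 ≤ s) :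
    Measure.pi (fun _ : Fin n => μ)
        {ω | ENNReal.ofReal s ≤ μ (⋃ j ∈ missedCells J B ω, B j)}
      ≤ 2 ^ J.card * ENNReal.ofReal (Real.exp (-(n * s))) := by
  classical
  set heavy := J.powerset.filter fun G => ENNReal.ofReal s ≤ μ (⋃ j ∈ G, B j)
  have hsub : {ω : Fin n → E | ENNReal.ofReal s ≤ μ (⋃ j ∈ missedCells J B ω, B j)}
      ⊆ ⋃ G ∈ heavy, {ω | ∀ i, ω i ∉ ⋃ j ∈ G, B j} := by
    intro ω hω
    refine Set.mem_biUnion (x := missedCells J B ω)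
      (Finset.mem_filter.2 ⟨Finset.mem_powerset.2 (Finset.filter_subset _ _), hω⟩) ?_
    intro i hi
    obtain ⟨j, hj, hij⟩ := Set.mem_iUnion₂.1 hi
    exact (Finset.mem_filter.1 hj).2 i hij
  calc Measure.pi (fun _ : Fin n => μ) {ω | ENNReal.ofReal s ≤ μ (⋃ j ∈ missedCells J B ω, B j)}
      ≤ ∑ G ∈ heavy, Measure.pi (fun _ : Fin n => μ) {ω | ∀ i, ω i ∉ ⋃ j ∈ G, B j} :=
        (measure_mono hsub).trans (measure_biUnion_finset_le _ _)
    _ ≤ ∑ _G ∈ heavy, ENNReal.ofReal (Real.exp (-(n * s))) := by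
        refine Finset.sum_le_sum fun G hG => ?_
        exact measure_pi_forall_notMem_le μ (G.measurableSet_biUnion fun j _ => hB j) hs
          (Finset.mem_filter.1 hG).2 n
    _ ≤ 2 ^ J.card * ENNReal.ofReal (Real.exp (-(n * s))) := by
        rw [Finset.sum_const, nsmul_eq_mul]
        gcongr
        exact_mod_cast (Finset.card_filter_le _ _).trans (Finset.card_powerset J).le

end Sampling

theorem two_pow_mul_ofReal_exp_le {n M : ℕ} {s t : ℝ} (hs : M * Real.log 2 + n * t ≤ n * s)
    (ht₀ : 0 ≤ t) (ht₁ : t ≤ 1) :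
    2 ^ M * ENNReal.ofReal (Real.exp (-(n * s))) ≤ ENNReal.ofReal (Real.exp (-(n * t ^ 2))) := by
  have h2 : (2 : ℝ≥0∞) ^ M = ENNReal.ofReal (Real.exp (M * Real.log 2)) := by
    rw [Real.exp_nat_mul, Real.exp_log two_pos, ENNReal.ofReal_pow zero_le_two,
      ENNReal.ofReal_ofNat]
  rw [h2, ← ENNReal.ofReal_mul (Real.exp_nonneg _), ← Real.exp_add]
  refine ENNReal.ofReal_le_ofReal (Real.exp_le_exp.2 ?_)
  nlinarith [mul_le_mul_of_nonneg_left (sq_le ht₀ ht₁) n.cast_nonneg]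

section MissingMass

variable {X : Type*} [PseudoMetricSpace X] {ι : Type*} {B : ι → Set X} {γ : ℝ}

theorem compl_iUnion_ball_subset_compl_union_missedCells
    (hB : ∀ j, ∀ x ∈ B j, ∀ y ∈ B j, dist x y < γ) (J : Finset ι) {n : ℕ} (ω : Fin n → X) :
    (⋃ i, ball (ω i) γ)ᶜ ⊆ (⋃ j ∈ J, B j)ᶜ ∪ ⋃ j ∈ missedCells J B ω, B j := by
  classical
  intro x hx
  by_cases hxJ : x ∈ ⋃ j ∈ J, B j
  · obtain ⟨j, hj, hxj⟩ := Set.mem_iUnion₂.1 hxJ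
    refine Or.inr (Set.mem_biUnion (Finset.mem_filter.2 ⟨hj, fun i hi => hx ?_⟩) hxj)
    exact Set.mem_iUnion.2 ⟨i, mem_ball.2 (hB j x hxj (ω i) hi)⟩
  · exact Or.inl hxJ

variable [MeasurableSpace X] (μ : Measure X) [IsProbabilityMeasure μ]

theorem measure_pi_compl_iUnion_ball_ge_le (hBm : ∀ j, MeasurableSet (B j))
    (hB : ∀ j, ∀ x ∈ B j, ∀ y ∈ B j, dist x y < γ) (J : Finset ι) (n : ℕ) {s : ℝ} (hs : 0 ≤ s) :
    Measure.pi (fun _ : Fin n => μ)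
        {ω | μ (⋃ j ∈ J, B j)ᶜ + ENNReal.ofReal s ≤ μ (⋃ i, ball (ω i) γ)ᶜ}
      ≤ 2 ^ J.card * ENNReal.ofReal (Real.exp (-(n * s))) := by
  refine le_trans (measure_mono fun ω hω => ?_) (measure_pi_missedCells_ge_le μ J hBm n hs)
  have hcover := measure_mono (μ := μ) (compl_iUnion_ball_subset_compl_union_missedCells hB J ω)
  exact (ENNReal.add_le_add_iff_left (measure_ne_top μ _)).1
    (hω.trans (hcover.trans (measure_union_le _ _)))

theorem measure_pi_compl_iUnion_ball_ge_add_le (hBm : ∀ j, MeasurableSet (B j))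
    (hB : ∀ j, ∀ x ∈ B j, ∀ y ∈ B j, dist x y < γ) (J : Finset ι) (n : ℕ) {a t : ℝ}
    (ha : (μ (⋃ j ∈ J, B j)ᶜ).toReal + J.card * Real.log 2 / n ≤ a) (ht : 0 ≤ t) :
    Measure.pi (fun _ : Fin n => μ) {ω | ENNReal.ofReal (a + t) ≤ μ (⋃ i, ball (ω i) γ)ᶜ}
      ≤ ENNReal.ofReal (Real.exp (-(n * t ^ 2))) := by
  rcases Nat.eq_zero_or_pos n with rfl | hn
  · simpa using prob_le_one
  set ε := (μ (⋃ j ∈ J, B j)ᶜ).toReal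
  have hJ : 0 ≤ J.card * Real.log 2 / n := by positivity
  have ha₀ : 0 ≤ a := by linarith [show 0 ≤ ε from ENNReal.toReal_nonneg]
  rcases lt_or_ge 1 t with ht₁ | ht₁
  · have hempty : {ω : Fin n → X | ENNReal.ofReal (a + t) ≤ μ (⋃ i, ball (ω i) γ)ᶜ} = ∅ :=
      Set.eq_empty_of_forall_notMem fun ω hω => (hω.trans prob_le_one).not_gt
        (ENNReal.one_lt_ofReal.2 (by linarith))
    simp only [hempty, measure_empty, zero_le]
  set s := a + t - ε
  have hs : J.card * Real.log 2 + n * t ≤ n * s := by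
    have hlog := (div_le_iff₀' (Nat.cast_pos.2 hn)).1 (le_sub_iff_add_le'.2 ha)
    have hns : n * s = n * (a - ε) + n * t := by ring
    linarith
  have hevent : ENNReal.ofReal (a + t) = μ (⋃ j ∈ J, B j)ᶜ + ENNReal.ofReal s := by
    rw [← ENNReal.ofReal_toReal (measure_ne_top μ (⋃ j ∈ J, B j)ᶜ),
      ← ENNReal.ofReal_add ENNReal.toReal_nonneg (by linarith), add_sub_cancel]
  simp_rw [hevent]
  exact (measure_pi_compl_iUnion_ball_ge_le μ hBm hB J n (by linarith)).trans
    (two_pow_mul_ofReal_exp_le hs ht ht₁)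

end MissingMass

theorem exists_tendsto_measure_compl_biUnion_ball_zero {X : Type*} [PseudoMetricSpace X]
    [MeasurableSpace X] [OpensMeasurableSpace X] {μ : Measure X} [IsFiniteMeasure μ] [NeZero μ]
    {s : Set X} (hs : TopologicalSpace.IsSeparable s) (hμs : μ sᶜ = 0) {r : ℝ} (hr : 0 < r) :
    ∃ c : ℕ → X, Tendsto (fun M => μ (⋃ j ∈ Finset.range M, ball (c j) r)ᶜ) atTop (nhds 0) := by
  obtain ⟨t, htc, hst⟩ := hs
  have htne : t.Nonempty := by
    refine Set.nonempty_iff_ne_empty.2 fun ht => NeZero.ne (μ Set.univ) ?_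
    rw [ht, closure_empty, Set.subset_empty_iff] at hst
    rwa [hst, Set.compl_empty] at hμs
  obtain ⟨c, rfl⟩ := htc.exists_eq_range htne
  set S : ℕ → Set X := fun M => ⋃ j ∈ Finset.range M, ball (c j) r
  have hcover : s ⊆ ⋃ M, S M := by
    intro x hx
    obtain ⟨y, ⟨j, rfl⟩, hxy⟩ := Metric.mem_closure_iff.1 (hst hx) r hr
    exact Set.mem_iUnion.2 ⟨j + 1, Set.mem_biUnion (Finset.self_mem_range_succ j) (mem_ball.2 hxy)⟩
  have hS : Monotone S := fun M N hMN =>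
    Set.biUnion_subset_biUnion_left (Finset.range_subset_range.2 hMN)
  have hlim := tendsto_measure_iInter_atTop (μ := μ) (s := fun M => (S M)ᶜ)
    (fun M => ((Finset.range M).measurableSet_biUnion fun _ _ => measurableSet_ball).compl
      |>.nullMeasurableSet)
    (fun M N hMN => Set.compl_subset_compl.2 (hS hMN)) ⟨0, measure_ne_top μ _⟩
  rw [← Set.compl_iUnion, measure_mono_null (Set.compl_subset_compl.2 hcover) hμs] at hlim
  exact ⟨c, hlim⟩

theorem exists_pos_tendsto_zero_forall_exists_add_div_le {ε κ : ℕ → ℝ} (hε₀ : ∀ M, 0 ≤ ε M)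
    (hε : Tendsto ε atTop (nhds 0)) (hκ : ∀ M, 0 ≤ κ M) :
    ∃ u : ℕ → ℝ, (∀ n, 0 < u n) ∧ Tendsto u atTop (nhds 0) ∧
      ∀ n : ℕ, ∃ M, ε M + κ M / n ≤ u n := by
  set g : ℕ → ℝ := fun n => ⨅ M, (ε M + κ M / n)
  have hterm₀ (n M : ℕ) : 0 ≤ ε M + κ M / n := add_nonneg (hε₀ M) (div_nonneg (hκ M) n.cast_nonneg)
  have hg₀ (n : ℕ) : 0 ≤ g n := le_ciInf (hterm₀ n)
  have hg_le (n M : ℕ) : g n ≤ ε M + κ M / n := ciInf_le ⟨0, Set.forall_mem_range.2 (hterm₀ n)⟩ M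
  -- the slack `1 / (n + 1)` makes `u` positive and lets some `M` come within it of the infimum
  have hu₀ (n : ℕ) : 0 < g n + 1 / (n + 1) := add_pos_of_nonneg_of_pos (hg₀ n) (by positivity)
  refine ⟨fun n => g n + 1 / (n + 1), hu₀, ?_, fun n => ?_⟩
  · refine tendsto_order.2 ⟨fun a ha => .of_forall fun n => ha.trans (hu₀ n), fun δ hδ => ?_⟩
    obtain ⟨M, hM⟩ := (hε.eventually (gt_mem_nhds (half_pos hδ))).exists
    have hrest : Tendsto (fun n : ℕ => κ M / n + 1 / ((n : ℝ) + 1)) atTop (nhds 0) := by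
      simpa using (tendsto_const_div_atTop_nhds_zero_nat (κ M)).add
        tendsto_one_div_add_atTop_nhds_zero_nat
    filter_upwards [hrest.eventually (gt_mem_nhds (half_pos hδ))] with n hn
    linarith [hg_le n M]
  · have hslack : (0 : ℝ) < 1 / (n + 1) := by positivity
    obtain ⟨M, hM⟩ := exists_lt_of_ciInf_lt (lt_add_of_pos_right (g n) hslack)
    exact ⟨M, hM.le⟩

/-- **Concentration of the `γ`-missing mass.** For a separable metric probability space
`(X, ρ, μ)` and fixed `γ > 0`, there is a positive sequence `u_γ(n) → 0` such that for
an i.i.d. sample `X_1, …, X_n ∼ μ`,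
`P[ μ(X ∖ ⋃_i B_γ(X_i)) ≥ u_γ(n) + t ] ≤ exp(−n t²)` for all `t > 0`. -/
theorem missing_mass_concentration {X : Type*} [MetricSpace X] [MeasurableSpace X]
    [BorelSpace X] (μ : Measure X) [IsProbabilityMeasure μ]
    (hsep : ∃ X' : Set X, MeasurableSet X' ∧ μ X' = 1 ∧ TopologicalSpace.IsSeparable X')
    (γ : ℝ) (hγ : 0 < γ) :
    ∃ u : ℕ → ℝ, (∀ n, 0 < u n) ∧ Tendsto u atTop (nhds 0) ∧
      ∀ n : ℕ, ∀ t : ℝ, 0 < t →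
        (Measure.pi fun _ : Fin n => μ)
            {ω : Fin n → X | ENNReal.ofReal (u n + t) ≤ μ (⋃ i, Metric.ball (ω i) γ)ᶜ}
          ≤ ENNReal.ofReal (Real.exp (-(n : ℝ) * t ^ 2)) := by
  obtain ⟨X', hX'm, hX'μ, hX'sep⟩ := hsep
  obtain ⟨c, hc⟩ := exists_tendsto_measure_compl_biUnion_ball_zero hX'sep
    ((prob_compl_eq_zero_iff hX'm).2 hX'μ) (half_pos hγ)
  obtain ⟨u, hu₀, hu, hM⟩ := exists_pos_tendsto_zero_forall_exists_add_div_le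
    (ε := fun M => (μ (⋃ j ∈ Finset.range M, ball (c j) (γ / 2))ᶜ).toReal)
    (κ := fun M => M * Real.log 2) (fun _ => ENNReal.toReal_nonneg)
    ((ENNReal.tendsto_toReal ENNReal.zero_ne_top).comp hc) (fun M => by positivity)
  refine ⟨u, hu₀, hu, fun n t ht => ?_⟩
  obtain ⟨M, hM⟩ := hM n
  have hdiam (j : ℕ) : ∀ x ∈ ball (c j) (γ / 2), ∀ y ∈ ball (c j) (γ / 2), dist x y < γ :=
    fun x hx y hy => by linarith [dist_triangle_right x y (c j), mem_ball.1 hx, mem_ball.1 hy]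
  simpa only [neg_mul] using measure_pi_compl_iUnion_ball_ge_add_le μ
    (fun j => measurableSet_ball) hdiam (Finset.range M) n (by simpa using hM) ht.le
end

section
/- Define, for n ∈ ℕ, α ∈ [0,1], even m ≤ n − 2, and δ ∈ (0,1): Q(n, α, m, δ) = (n/(n−m))·α + sqrt( 8·(n/(n−m))·α·( m·ln(2en/m) + ln(2n/δ) ) / (n−m) ) + 9·( m·ln(2en/m) + ln(2n/δ) ) / (n−m), and Q(n, α, m, δ) = max(1, Q(n, α, n−2, δ)) for m > n − 2. Then: (1) for each fixed n and δ, Q is monotonically nondecreasing in α and in m; and (2) there exists a sequence δ_n ∈ (0,1) with ∑_{n=1}^∞ δ_n < ∞ such that for every sequence of even integers m_n with m_n/n → 0, lim_{n→∞} sup_{α∈[0,1]} ( Q(n, α, m_n, δ_n) − α ) = 0. -/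
open scoped ENNReal

/-- The main expression of the compression generalization bound, for `m ≤ n − 2`. -/
noncomputable def Qaux (n : ℕ) (α : ℝ) (m : ℕ) (δ : ℝ) : ℝ :=
  ((n : ℝ) / ((n : ℝ) - (m : ℝ))) * α
    + Real.sqrt (8 * ((n : ℝ) / ((n : ℝ) - (m : ℝ))) * α
        * ((m : ℝ) * Real.log (2 * Real.exp 1 * (n : ℝ) / (m : ℝ))
            + Real.log (2 * (n : ℝ) / δ))
        / ((n : ℝ) - (m : ℝ)))
    + 9 * ((m : ℝ) * Real.log (2 * Real.exp 1 * (n : ℝ) / (m : ℝ))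
        + Real.log (2 * (n : ℝ) / δ))
        / ((n : ℝ) - (m : ℝ))

/-- The compression generalization bound `Q(n, α, m, δ)`: equal to `Qaux` for
`m ≤ n − 2`, and to `max(1, Q(n, α, n−2, δ))` for `m > n − 2`. -/
noncomputable def Qbound (n : ℕ) (α : ℝ) (m : ℕ) (δ : ℝ) : ℝ :=
  if m ≤ n - 2 then Qaux n α m δ else max 1 (Qaux n α (n - 2) δ)


lemma Qaux_zero (α : ℝ) (δ : ℝ) : Qaux 0 α 0 δ = 0 := by
  simp [Qaux]

lemma mterm_nonneg {n m : ℕ} (hm : m ≤ n) :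
    0 ≤ (m : ℝ) * Real.log (2 * Real.exp 1 * (n : ℝ) / (m : ℝ)) := by
  rcases Nat.eq_zero_or_pos m with h | h
  · simp [h]
  · have hm0 : (0:ℝ) < m := by exact_mod_cast h
    apply mul_nonneg hm0.le
    apply Real.log_nonneg
    rw [le_div_iff₀ hm0]
    have : (m:ℝ) ≤ n := by exact_mod_cast hm
    nlinarith [Real.exp_one_gt_d9]

lemma Lr_nonneg {n m : ℕ} {δ : ℝ} (hn : 1 ≤ n) (hm : m ≤ n) (hδ : δ ∈ Set.Ioo (0:ℝ) 1) :
    0 ≤ (m : ℝ) * Real.log (2 * Real.exp 1 * (n : ℝ) / (m : ℝ))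
        + Real.log (2 * (n : ℝ) / δ) := by
  have h2 : (0:ℝ) ≤ Real.log (2 * (n:ℝ) / δ) := by
    apply Real.log_nonneg
    rw [le_div_iff₀ hδ.1]
    have : (1:ℝ) ≤ n := by exact_mod_cast hn
    nlinarith [hδ.2]
  exact add_nonneg (mterm_nonneg hm) h2

lemma mlog_mono {n m m' : ℕ} (hmm : m ≤ m') (hm'n : m' ≤ n) :
    (m:ℝ) * Real.log (2 * Real.exp 1 * (n : ℝ) / (m : ℝ))
      ≤ (m':ℝ) * Real.log (2 * Real.exp 1 * (n : ℝ) / (m' : ℝ)) := by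
  rcases Nat.eq_zero_or_pos m with h | hm1
  · subst h; simpa using mterm_nonneg hm'n
  have hm0 : (0:ℝ) < m := by exact_mod_cast hm1
  have hm'0 : (0:ℝ) < m' := lt_of_lt_of_le hm0 (by exact_mod_cast hmm)
  have hmr : (m:ℝ) ≤ m' := by exact_mod_cast hmm
  have hnr : (m':ℝ) ≤ n := by exact_mod_cast hm'n
  have hn0 : (0:ℝ) < n := lt_of_lt_of_le hm'0 hnr
  have ha : (0:ℝ) < 2 * Real.exp 1 * n / m' := by positivity
  have hsplit : 2 * Real.exp 1 * (n:ℝ) / m = (2 * Real.exp 1 * n / m') * (m' / m) := by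
    field_simp
  have hlog : Real.log (2 * Real.exp 1 * (n:ℝ) / m)
      = Real.log (2 * Real.exp 1 * n / m') + Real.log ((m':ℝ) / m) := by
    rw [hsplit, Real.log_mul (ne_of_gt ha) (by positivity)]
  have h1 : Real.log ((m':ℝ)/m) ≤ (m':ℝ)/m - 1 :=
    Real.log_le_sub_one_of_pos (by positivity)
  have h2 : (1:ℝ) ≤ Real.log (2 * Real.exp 1 * n / m') := by
    rw [Real.le_log_iff_exp_le ha]
    rw [le_div_iff₀ hm'0]
    nlinarith [Real.exp_pos 1]
  have h3 : (m:ℝ) * Real.log ((m':ℝ)/m) ≤ m' - m := by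
    calc (m:ℝ) * Real.log ((m':ℝ)/m) ≤ m * ((m':ℝ)/m - 1) :=
          mul_le_mul_of_nonneg_left h1 hm0.le
      _ = m' - m := by field_simp
  rw [hlog]
  nlinarith [h2, h3]

lemma Qaux_mono_alpha {n m : ℕ} {δ α α' : ℝ} (hδ : δ ∈ Set.Ioo (0:ℝ) 1)
    (hnm : m < n) (h0 : 0 ≤ α) (h1 : α ≤ α') :
    Qaux n α m δ ≤ Qaux n α' m δ := by
  have hn : 1 ≤ n := by omega
  have hL := Lr_nonneg hn hnm.le hδ
  have hd : (0:ℝ) < (n:ℝ) - m := by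
    have : (m:ℝ) < n := by exact_mod_cast hnm
    linarith
  have hn0 : (0:ℝ) ≤ n := by positivity
  unfold Qaux
  gcongr

lemma Qaux_mono_m {n m m' : ℕ} {δ α : ℝ} (hδ : δ ∈ Set.Ioo (0:ℝ) 1)
    (hmm : m ≤ m') (hm' : m' < n) (h0 : 0 ≤ α) :
    Qaux n α m δ ≤ Qaux n α m' δ := by
  have hn : 1 ≤ n := by omega
  have hL := Lr_nonneg hn (le_trans hmm hm'.le) hδ
  have hL' := Lr_nonneg hn hm'.le hδ
  have hLL : (m:ℝ) * Real.log (2 * Real.exp 1 * (n:ℝ) / m) + Real.log (2 * (n:ℝ) / δ)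
      ≤ (m':ℝ) * Real.log (2 * Real.exp 1 * (n:ℝ) / m') + Real.log (2 * (n:ℝ) / δ) :=
    add_le_add (mlog_mono hmm hm'.le) le_rfl
  have hd' : (0:ℝ) < (n:ℝ) - m' := by
    have : (m':ℝ) < n := by exact_mod_cast hm'
    linarith
  have hdd : (n:ℝ) - m' ≤ (n:ℝ) - m := by
    have : (m:ℝ) ≤ m' := by exact_mod_cast hmm
    linarith
  have hn0 : (0:ℝ) ≤ n := by positivity
  unfold Qaux
  gcongr

lemma Qaux_mono_alpha' {n m : ℕ} {δ α α' : ℝ} (hδ : δ ∈ Set.Ioo (0:ℝ) 1)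
    (hmn : m ≤ n - 2) (h0 : 0 ≤ α) (h1 : α ≤ α') :
    Qaux n α m δ ≤ Qaux n α' m δ := by
  rcases Nat.eq_zero_or_pos n with hn | hn
  · subst hn
    have : m = 0 := by omega
    subst this
    simp [Qaux_zero]
  · exact Qaux_mono_alpha hδ (by omega) h0 h1

lemma Qaux_mono_m' {n m m' : ℕ} {δ α : ℝ} (hδ : δ ∈ Set.Ioo (0:ℝ) 1)
    (hmm : m ≤ m') (hm' : m' ≤ n - 2) (h0 : 0 ≤ α) :
    Qaux n α m δ ≤ Qaux n α m' δ := by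
  rcases Nat.eq_zero_or_pos n with hn | hn
  · subst hn
    have h1 : m = 0 := by omega
    have h2 : m' = 0 := by omega
    subst h1; subst h2; exact le_rfl
  · rcases Nat.eq_or_lt_of_le hmm with h | h
    · subst h; exact le_rfl
    · exact Qaux_mono_m hδ hmm (by omega) h0

lemma part1 : (∀ n : ℕ, ∀ δ ∈ Set.Ioo (0 : ℝ) 1,
      (∀ m : ℕ, ∀ α α' : ℝ, 0 ≤ α → α ≤ α' → α' ≤ 1 →
        Qbound n α m δ ≤ Qbound n α' m δ) ∧
      (∀ α ∈ Set.Icc (0 : ℝ) 1, ∀ m m' : ℕ, m ≤ m' →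
        Qbound n α m δ ≤ Qbound n α m' δ)) := by
  intro n δ hδ
  constructor
  · intro m α α' h0 h01 h1
    unfold Qbound
    split_ifs with h
    · exact Qaux_mono_alpha' hδ h h0 h01
    · exact max_le_max le_rfl (Qaux_mono_alpha' hδ (le_refl (n-2)) h0 h01)
  · intro α hα m m' hmm
    unfold Qbound
    split_ifs with h h' h''
    · exact Qaux_mono_m' hδ hmm h' hα.1
    · exact le_max_of_le_right (Qaux_mono_m' hδ h (le_refl (n-2)) hα.1)
    · omega
    · exact le_rfl




lemma log_le_two_sqrt {x : ℝ} (hx : 0 ≤ x) : Real.log x ≤ 2 * Real.sqrt x := by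
  rcases eq_or_lt_of_le hx with h | h
  · simp [← h]
  · have hs : 0 < Real.sqrt x := Real.sqrt_pos.mpr h
    have h1 : Real.log (Real.sqrt x) ≤ Real.sqrt x - 1 := Real.log_le_sub_one_of_pos hs
    have h2 : Real.log (Real.sqrt x) = Real.log x / 2 := Real.log_sqrt hx
    linarith

lemma sqrt_id {m n : ℝ} (hm : 0 < m) (hn : 0 < n) :
    m * Real.sqrt (n/m) / n = Real.sqrt (m/n) := by
  have : m * Real.sqrt (n/m) / n = Real.sqrt (m^2 * (n/m) / n^2) := by
    rw [Real.sqrt_div (by positivity : (0:ℝ) ≤ m^2 * (n/m)) (n^2),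
      Real.sqrt_mul (sq_nonneg m) (n/m), Real.sqrt_sq hm.le, Real.sqrt_sq hn.le]
  rw [this]
  congr 1
  field_simp

lemma key1 {m n : ℝ} (hm : 0 < m) (hn : 0 < n) :
    m * Real.log (2 * Real.exp 1 * n / m) / n
      ≤ 2 * Real.sqrt (2 * Real.exp 1) * Real.sqrt (m / n) := by
  have hc : (0:ℝ) ≤ 2 * Real.exp 1 * n / m := by positivity
  have h1 := log_le_two_sqrt hc
  have h2 : m * Real.log (2 * Real.exp 1 * n / m) / n
      ≤ m * (2 * Real.sqrt (2 * Real.exp 1 * n / m)) / n := by gcongr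
  refine h2.trans (le_of_eq ?_)
  rw [show 2 * Real.exp 1 * n / m = (2 * Real.exp 1) * (n/m) by ring,
    Real.sqrt_mul (by positivity)]
  calc m * (2 * (Real.sqrt (2*Real.exp 1) * Real.sqrt (n/m))) / n
      = 2 * Real.sqrt (2*Real.exp 1) * (m * Real.sqrt (n/m) / n) := by ring
    _ = 2 * Real.sqrt (2*Real.exp 1) * Real.sqrt (m/n) := by rw [sqrt_id hm hn]

noncomputable def δs (n : ℕ) : ℝ := 1 / ((n:ℝ) + 2)^2

lemma δs_mem (n : ℕ) : δs n ∈ Set.Ioo (0:ℝ) 1 := by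
  rw [δs]
  constructor
  · positivity
  · rw [div_lt_one (by positivity)]
    have : (0:ℝ) ≤ n := Nat.cast_nonneg n
    nlinarith

lemma δs_summable : Summable δs := by
  have h : Summable (fun n : ℕ => 1/((n:ℝ))^2) := by
    simpa using Real.summable_one_div_nat_pow.mpr (by norm_num : 1 < 2)
  have h2 := (summable_nat_add_iff 2).mpr h
  refine h2.congr fun n => ?_
  simp only [δs]
  push_cast
  norm_num

noncomputable def Lf (mseq : ℕ → ℕ) (n : ℕ) : ℝ :=
  (mseq n : ℝ) * Real.log (2 * Real.exp 1 * (n:ℝ) / (mseq n : ℝ))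
    + Real.log (2 * (n:ℝ) / δs n)

lemma part2 : (∃ δseq : ℕ → ℝ, (∀ n, δseq n ∈ Set.Ioo (0 : ℝ) 1) ∧ Summable δseq ∧
      ∀ mseq : ℕ → ℕ, (∀ n, Even (mseq n)) →
        Filter.Tendsto (fun n : ℕ => (mseq n : ℝ) / (n : ℝ)) Filter.atTop (nhds 0) →
        Filter.Tendsto (fun n : ℕ =>
            ⨆ α : Set.Icc (0 : ℝ) 1, (Qbound n (↑α) (mseq n) (δseq n) - (↑α : ℝ)))
          Filter.atTop (nhds 0)) := by
  refine ⟨δs, δs_mem, δs_summable, ?_⟩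
  intro mseq _ hr
  have e0 := Real.exp_pos 1
  haveI : Nonempty ↑(Set.Icc (0:ℝ) 1) := ⟨⟨0, by constructor <;> norm_num⟩⟩
  have hP : ∀ᶠ n : ℕ in Filter.atTop, 4 ≤ n ∧ (mseq n : ℝ) / (n:ℝ) < 1/2 :=
    (Filter.eventually_ge_atTop 4).and (hr.eventually_lt_const (by norm_num))
  have hfacts : ∀ n : ℕ, 4 ≤ n → (mseq n : ℝ) / (n:ℝ) < 1/2 →
      (0:ℝ) < n ∧ mseq n ≤ n - 2 ∧ (0:ℝ) < (n:ℝ) - mseq n := by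
    intro n h4 hhalf
    have hn0 : (0:ℝ) < n := by
      have : (4:ℝ) ≤ n := by exact_mod_cast h4
      linarith
    have hmlt : (mseq n : ℝ) < n / 2 := by
      rw [div_lt_iff₀ hn0] at hhalf; linarith
    have h2m : 2 * mseq n < n := by
      have : ((2 * mseq n : ℕ) : ℝ) < n := by push_cast; linarith
      exact_mod_cast this
    have hm2 : mseq n ≤ n - 2 := by omega
    have hd : (0:ℝ) < (n:ℝ) - mseq n := by
      have : (mseq n : ℝ) ≤ (n:ℝ) := by
        have : (mseq n : ℕ) ≤ n := by omega
        exact_mod_cast this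
      nlinarith
    exact ⟨hn0, hm2, hd⟩
  have h1mr : Filter.Tendsto (fun n : ℕ => 1 - (mseq n : ℝ)/(n:ℝ)) Filter.atTop (nhds 1) := by
    simpa using (tendsto_const_nhds.sub hr)
  have hU : Filter.Tendsto (fun n : ℕ => (n:ℝ) / ((n:ℝ) - mseq n)) Filter.atTop (nhds 1) := by
    have base : Filter.Tendsto (fun n : ℕ => (1 - (mseq n : ℝ)/(n:ℝ))⁻¹)
        Filter.atTop (nhds 1) := by
      simpa using (h1mr.inv₀ one_ne_zero)
    refine base.congr' ?_
    filter_upwards [hP] with n ⟨h4, hhalf⟩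
    obtain ⟨hn0, hm2, hd⟩ := hfacts n h4 hhalf
    rw [show 1 - (mseq n : ℝ)/(n:ℝ) = ((n:ℝ) - mseq n)/(n:ℝ) by field_simp, inv_div]
  have hA : Filter.Tendsto
      (fun n : ℕ => (mseq n : ℝ) * Real.log (2 * Real.exp 1 * (n:ℝ) / (mseq n : ℝ)) / (n:ℝ))
      Filter.atTop (nhds 0) := by
    apply squeeze_zero'
      (g := fun n : ℕ => 2 * Real.sqrt (2*Real.exp 1) * Real.sqrt ((mseq n : ℝ)/(n:ℝ)))
    · filter_upwards [hP] with n ⟨h4, hhalf⟩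
      obtain ⟨hn0, hm2, hd⟩ := hfacts n h4 hhalf
      exact div_nonneg (mterm_nonneg (by omega)) hn0.le
    · filter_upwards [hP] with n ⟨h4, hhalf⟩
      obtain ⟨hn0, hm2, hd⟩ := hfacts n h4 hhalf
      rcases Nat.eq_zero_or_pos (mseq n) with h | h
      · rw [h]
        simp
      · have hm0 : (0:ℝ) < (mseq n : ℝ) := by exact_mod_cast h
        exact key1 hm0 hn0
    · have : Filter.Tendsto (fun n : ℕ => 2 * Real.sqrt (2*Real.exp 1)
          * Real.sqrt ((mseq n : ℝ)/(n:ℝ))) Filter.atTop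
          (nhds (2 * Real.sqrt (2*Real.exp 1) * Real.sqrt 0)) :=
        (hr.sqrt).const_mul _
      simpa using this
  have hB : Filter.Tendsto (fun n : ℕ => Real.log (2 * (n:ℝ) / δs n) / (n:ℝ))
      Filter.atTop (nhds 0) := by
    apply squeeze_zero' (g := fun n : ℕ => 8 * Real.sqrt (((n:ℝ)+2)/(n:ℝ)^2))
    · filter_upwards [Filter.eventually_ge_atTop 1] with n h1
      have hn0 : (0:ℝ) < n := by exact_mod_cast Nat.lt_of_lt_of_le Nat.zero_lt_one h1
      have hn1 : (1:ℝ) ≤ n := by exact_mod_cast h1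
      have harg : 2 * (n:ℝ) / δs n = 2 * (n:ℝ) * ((n:ℝ)+2)^2 := by
        rw [δs]; field_simp
      rw [harg]
      apply div_nonneg _ hn0.le
      apply Real.log_nonneg
      nlinarith
    · filter_upwards [Filter.eventually_ge_atTop 1] with n h1
      have hn0 : (0:ℝ) < n := by exact_mod_cast Nat.lt_of_lt_of_le Nat.zero_lt_one h1
      have harg : 2 * (n:ℝ) / δs n = 2 * (n:ℝ) * ((n:ℝ)+2)^2 := by
        rw [δs]; field_simp
      have h2n : 2*(n:ℝ) ≤ ((n:ℝ)+2)^2 := by nlinarith [sq_nonneg (n:ℝ)]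
      have hle : 2 * (n:ℝ) * ((n:ℝ)+2)^2 ≤ ((n:ℝ)+2)^4 := by
        calc 2*(n:ℝ)*((n:ℝ)+2)^2 ≤ ((n:ℝ)+2)^2*((n:ℝ)+2)^2 :=
              mul_le_mul_of_nonneg_right h2n (sq_nonneg _)
          _ = ((n:ℝ)+2)^4 := by ring
      have hlog1 : Real.log (2 * (n:ℝ) / δs n) ≤ Real.log (((n:ℝ)+2)^4) := by
        rw [harg]
        exact Real.log_le_log (by positivity) hle
      have hlog2 : Real.log (((n:ℝ)+2)^4) = 4 * Real.log ((n:ℝ)+2) := by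
        rw [Real.log_pow]; norm_num
      have hlog3 : Real.log ((n:ℝ)+2) ≤ 2 * Real.sqrt ((n:ℝ)+2) :=
        log_le_two_sqrt (by positivity)
      have hlogtot : Real.log (2 * (n:ℝ) / δs n) ≤ 8 * Real.sqrt ((n:ℝ)+2) := by
        rw [hlog2] at hlog1; linarith
      calc Real.log (2 * (n:ℝ) / δs n) / (n:ℝ)
          ≤ (8 * Real.sqrt ((n:ℝ)+2)) / (n:ℝ) := by gcongr
        _ = 8 * Real.sqrt (((n:ℝ)+2)/(n:ℝ)^2) := by
            rw [Real.sqrt_div (by positivity : (0:ℝ) ≤ (n:ℝ)+2) ((n:ℝ)^2),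
              Real.sqrt_sq hn0.le]
            ring
    · have hq : Filter.Tendsto (fun n : ℕ => ((n:ℝ)+2)/(n:ℝ)^2) Filter.atTop (nhds 0) := by
        apply squeeze_zero' (g := fun n : ℕ => 3/(n:ℝ))
        · filter_upwards [Filter.eventually_ge_atTop 1] with n h1
          positivity
        · filter_upwards [Filter.eventually_ge_atTop 1] with n h1
          have hn1 : (1:ℝ) ≤ n := by exact_mod_cast h1
          have hn0 : (0:ℝ) < n := by linarith
          rw [div_le_div_iff₀ (by positivity) hn0]
          nlinarith
        · exact tendsto_const_div_atTop_nhds_zero_nat 3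
      have : Filter.Tendsto (fun n : ℕ => 8 * Real.sqrt (((n:ℝ)+2)/(n:ℝ)^2))
          Filter.atTop (nhds (8 * Real.sqrt 0)) := (hq.sqrt).const_mul _
      simpa using this
  have hLn : Filter.Tendsto (fun n : ℕ => Lf mseq n / (n:ℝ)) Filter.atTop (nhds 0) := by
    have := hA.add hB
    simp only [← add_div] at this
    simpa [Lf] using this
  have hV : Filter.Tendsto (fun n : ℕ => Lf mseq n / ((n:ℝ) - mseq n)) Filter.atTop (nhds 0) := by
    have base := hLn.mul hU
    rw [zero_mul] at base
    refine base.congr' ?_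
    filter_upwards [hP] with n ⟨h4, hhalf⟩
    obtain ⟨hn0, hm2, hd⟩ := hfacts n h4 hhalf
    field_simp
  have hW : Filter.Tendsto (fun n : ℕ => (mseq n : ℝ) / ((n:ℝ) - mseq n))
      Filter.atTop (nhds 0) := by
    have base := hr.mul hU
    rw [zero_mul] at base
    refine base.congr' ?_
    filter_upwards [hP] with n ⟨h4, hhalf⟩
    obtain ⟨hn0, hm2, hd⟩ := hfacts n h4 hhalf
    field_simp
  have hBnd : Filter.Tendsto (fun n : ℕ =>
      (mseq n : ℝ) / ((n:ℝ) - mseq n)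
        + Real.sqrt (8 * ((n:ℝ)/((n:ℝ) - mseq n)) * (Lf mseq n / ((n:ℝ) - mseq n)))
        + 9 * (Lf mseq n / ((n:ℝ) - mseq n))) Filter.atTop (nhds 0) := by
    have h8 : Filter.Tendsto (fun n : ℕ =>
        8 * ((n:ℝ)/((n:ℝ) - mseq n)) * (Lf mseq n / ((n:ℝ) - mseq n)))
        Filter.atTop (nhds (8 * 1 * 0)) := (hU.const_mul 8).mul hV
    have hs := h8.sqrt
    have := (hW.add hs).add (hV.const_mul 9)
    simpa using this
  have hkey : ∀ᶠ n : ℕ in Filter.atTop,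
      0 ≤ (⨆ α : Set.Icc (0 : ℝ) 1, (Qbound n (↑α) (mseq n) (δs n) - (↑α : ℝ)))
      ∧ (⨆ α : Set.Icc (0 : ℝ) 1, (Qbound n (↑α) (mseq n) (δs n) - (↑α : ℝ)))
        ≤ (mseq n : ℝ) / ((n:ℝ) - mseq n)
            + Real.sqrt (8 * ((n:ℝ)/((n:ℝ) - mseq n)) * (Lf mseq n / ((n:ℝ) - mseq n)))
            + 9 * (Lf mseq n / ((n:ℝ) - mseq n)) := by
    filter_upwards [hP] with n ⟨h4, hhalf⟩
    obtain ⟨hn0, hm2, hd⟩ := hfacts n h4 hhalf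
    have hn1 : 1 ≤ n := by omega
    have hLge : 0 ≤ Lf mseq n := Lr_nonneg hn1 (by omega) (δs_mem n)
    have hu0 : (0:ℝ) ≤ (n:ℝ)/((n:ℝ) - mseq n) := by positivity
    have hub : ∀ α : ↑(Set.Icc (0:ℝ) 1), Qbound n (↑α) (mseq n) (δs n) - (↑α : ℝ)
        ≤ (mseq n : ℝ) / ((n:ℝ) - mseq n)
            + Real.sqrt (8 * ((n:ℝ)/((n:ℝ) - mseq n)) * (Lf mseq n / ((n:ℝ) - mseq n)))
            + 9 * (Lf mseq n / ((n:ℝ) - mseq n)) := by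
      rintro ⟨a, ha0, ha1⟩
      rw [Qbound, if_pos hm2]
      have hQ : Qaux n a (mseq n) (δs n)
          = ((n:ℝ)/((n:ℝ) - mseq n)) * a
            + Real.sqrt (8 * ((n:ℝ)/((n:ℝ) - mseq n)) * a * (Lf mseq n) / ((n:ℝ) - mseq n))
            + 9 * (Lf mseq n) / ((n:ℝ) - mseq n) := rfl
      rw [hQ]
      have h_first : ((n:ℝ)/((n:ℝ) - mseq n)) * a - a ≤ (mseq n : ℝ)/((n:ℝ) - mseq n) := by
        have heq : ((n:ℝ)/((n:ℝ) - mseq n)) * a - a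
            = ((mseq n : ℝ)/((n:ℝ) - mseq n)) * a := by
          field_simp
          ring
        rw [heq]
        have hm0 : (0:ℝ) ≤ (mseq n:ℝ)/((n:ℝ) - mseq n) := by positivity
        calc ((mseq n : ℝ)/((n:ℝ) - mseq n)) * a ≤ ((mseq n : ℝ)/((n:ℝ) - mseq n)) * 1 :=
              mul_le_mul_of_nonneg_left ha1 hm0
          _ = (mseq n : ℝ)/((n:ℝ) - mseq n) := mul_one _
      have h_sqrt : Real.sqrt (8 * ((n:ℝ)/((n:ℝ) - mseq n)) * a * (Lf mseq n) / ((n:ℝ) - mseq n))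
          ≤ Real.sqrt (8 * ((n:ℝ)/((n:ℝ) - mseq n)) * (Lf mseq n / ((n:ℝ) - mseq n))) := by
        apply Real.sqrt_le_sqrt
        rw [show 8 * ((n:ℝ)/((n:ℝ) - mseq n)) * (Lf mseq n / ((n:ℝ) - mseq n))
            = 8 * ((n:ℝ)/((n:ℝ) - mseq n)) * 1 * (Lf mseq n) / ((n:ℝ) - mseq n) by ring]
        gcongr
      have h_third : 9 * (Lf mseq n) / ((n:ℝ) - mseq n)
          = 9 * (Lf mseq n / ((n:ℝ) - mseq n)) := by ring
      linarith [h_first, h_sqrt]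
    constructor
    · have hmem : (0:ℝ) ∈ Set.Icc (0:ℝ) 1 := by constructor <;> norm_num
      have hbdd : BddAbove (Set.range fun α : ↑(Set.Icc (0:ℝ) 1) =>
          Qbound n (↑α) (mseq n) (δs n) - (↑α : ℝ)) := by
        refine ⟨(mseq n : ℝ) / ((n:ℝ) - mseq n)
            + Real.sqrt (8 * ((n:ℝ)/((n:ℝ) - mseq n)) * (Lf mseq n / ((n:ℝ) - mseq n)))
            + 9 * (Lf mseq n / ((n:ℝ) - mseq n)), ?_⟩
        rintro x ⟨α, rfl⟩
        exact hub α
      have h0le : 0 ≤ Qbound n (0:ℝ) (mseq n) (δs n) - (0:ℝ) := by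
        rw [sub_zero, Qbound, if_pos hm2]
        have hQ : Qaux n 0 (mseq n) (δs n)
            = ((n:ℝ)/((n:ℝ) - mseq n)) * 0
              + Real.sqrt (8 * ((n:ℝ)/((n:ℝ) - mseq n)) * 0 * (Lf mseq n) / ((n:ℝ) - mseq n))
              + 9 * (Lf mseq n) / ((n:ℝ) - mseq n) := rfl
        rw [hQ]
        refine add_nonneg (add_nonneg (by simp) (Real.sqrt_nonneg _)) ?_
        exact div_nonneg (by positivity) hd.le
      exact le_trans h0le (le_ciSup hbdd ⟨0, hmem⟩)
    · exact ciSup_le hub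
  exact squeeze_zero' (hkey.mono fun n h => h.1) (hkey.mono fun n h => h.2) hBnd

/-- Properties of the compression bound `Q`: (1) for fixed `n, δ` it is monotonically
nondecreasing in `α ∈ [0,1]` and in `m`; (2) there is a summable sequence
`δ_n ∈ (0,1)` such that for every sequence of even integers `m_n = o(n)`,
`sup_{α ∈ [0,1]} (Q(n, α, m_n, δ_n) − α) → 0`. -/
theorem Qbound_monotone_and_tendsto :
    (∀ n : ℕ, ∀ δ ∈ Set.Ioo (0 : ℝ) 1,
      (∀ m : ℕ, ∀ α α' : ℝ, 0 ≤ α → α ≤ α' → α' ≤ 1 →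
        Qbound n α m δ ≤ Qbound n α' m δ) ∧
      (∀ α ∈ Set.Icc (0 : ℝ) 1, ∀ m m' : ℕ, m ≤ m' →
        Qbound n α m δ ≤ Qbound n α m' δ)) ∧
    (∃ δseq : ℕ → ℝ, (∀ n, δseq n ∈ Set.Ioo (0 : ℝ) 1) ∧ Summable δseq ∧
      ∀ mseq : ℕ → ℕ, (∀ n, Even (mseq n)) →
        Filter.Tendsto (fun n : ℕ => (mseq n : ℝ) / (n : ℝ)) Filter.atTop (nhds 0) →
        Filter.Tendsto (fun n : ℕ =>
            ⨆ α : Set.Icc (0 : ℝ) 1, (Qbound n (↑α) (mseq n) (δseq n) - (↑α : ℝ)))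
          Filter.atTop (nhds 0)) := by
  exact ⟨part1, part2⟩
end

section
/- Let X be a set of cardinality κ = |X|, and suppose there exists a {0,1}-valued probability measure on (X, 2^X) that vanishes on singletons and is κ-additive (i.e., κ is two-valued measurable). Then there exists a {0,1}-valued, singleton-vanishing, κ-additive probability measure μ on (X, 2^X) with the following homogeneity property: for every function f from the finite subsets of X to ℝ, there exists U ⊆ X with μ(U) = 1 such that for every n ∈ ℕ there is a constant C_n ∈ ℝ with f(W) = C_n for every n-element subset W of U. -/
open scoped ENNReal

universe u

/-- A probability measure defined on *all* subsets of `X`: a countably additive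
function `m : 2^X → [0,1]` with `m ∅ = 0` and `m X = 1`. -/
structure TotalMeasure (X : Type u) : Type u where
  m : Set X → ℝ≥0∞
  m_empty : m ∅ = 0
  m_univ : m Set.univ = 1
  m_iUnion : ∀ A : ℕ → Set X, Pairwise (Function.onFun Disjoint A) →
    m (⋃ i, A i) = ∑' i, m (A i)

/-! Well-order `X` in type `ord #X`, so that proper initial segments have cardinality `< #X` and
are therefore null. Call `g : X → X` unbounded if no fibre and no preimage of an initial segment
has measure one. By countable completeness, "`h < g` on a set of measure one" is well-founded,
so there is a minimal unbounded `g`. Its image measure `μ₀.map g` has the pressing-down property: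
if `F` is regressive a.e. but not constant a.e., then `F ∘ g` is unbounded (a measure-one set
inside a small initial segment would split into fewer than `#X` fibres, one of measure one) and
lies below `g`. Pressing-down yields closure under diagonal intersections, and Rowbottom's
induction on `n` then gives a measure-one homogeneous set for each `n`; intersect these. -/

open Set Cardinal

namespace TotalMeasure

variable {Y Z : Type u} (ν : TotalMeasure Y)

theorem m_union {A B : Set Y} (h : Disjoint A B) : ν.m (A ∪ B) = ν.m A + ν.m B := by
  let s : ℕ → Set Y := fun n => if n = 0 then A else if n = 1 then B else ∅
  have hs : ⋃ n, s n = A ∪ B := by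
    ext x
    simp only [mem_iUnion, mem_union]
    constructor
    · rintro ⟨_ | _ | n, hx⟩ <;> simp_all [s]
    · rintro (hx | hx)
      exacts [⟨0, hx⟩, ⟨1, hx⟩]
  have hd : Pairwise (Function.onFun Disjoint s) := by
    rintro (_ | _ | i) (_ | _ | j) hij <;> simp_all [Function.onFun, s, h.symm]
  rw [← hs, ν.m_iUnion s hd, tsum_eq_sum (s := {0, 1})]
  · simp [s]
  · rintro (_ | _ | n) hn <;> simp_all [s, ν.m_empty]

theorem m_mono {A B : Set Y} (h : A ⊆ B) : ν.m A ≤ ν.m B := by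
  rw [← union_sdiff_cancel h, ν.m_union disjoint_sdiff_right]
  exact le_self_add

theorem m_le_one (A : Set Y) : ν.m A ≤ 1 :=
  ν.m_univ ▸ ν.m_mono (subset_univ A)

theorem m_eq_one_of_subset {A B : Set Y} (h : A ⊆ B) (hA : ν.m A = 1) : ν.m B = 1 :=
  le_antisymm (ν.m_le_one B) (hA ▸ ν.m_mono h)

theorem m_add_m_compl (A : Set Y) : ν.m A + ν.m Aᶜ = 1 := by
  rw [← ν.m_union disjoint_compl_right, union_compl_self, ν.m_univ]

theorem m_compl_eq_one {A : Set Y} (h : ν.m A = 0) : ν.m Aᶜ = 1 := by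
  simpa [h] using ν.m_add_m_compl A

theorem m_eq_one_iff_m_compl_eq_zero {A : Set Y} : ν.m A = 1 ↔ ν.m Aᶜ = 0 := by
  refine ⟨fun h => ?_, fun h => compl_compl A ▸ ν.m_compl_eq_one h⟩
  simpa [h] using ν.m_add_m_compl A

theorem m_iUnion_eq_zero {A : ℕ → Set Y} (h : ∀ n, ν.m (A n) = 0) : ν.m (⋃ n, A n) = 0 := by
  rw [← iUnion_disjointed, ν.m_iUnion _ (disjoint_disjointed A)]
  exact ENNReal.tsum_eq_zero.2 fun n =>
    nonpos_iff_eq_zero.1 ((ν.m_mono (disjointed_le A n)).trans_eq (h n))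

theorem m_iInter_eq_one {ι : Sort*} [Countable ι] {A : ι → Set Y} (h : ∀ i, ν.m (A i) = 1) :
    ν.m (⋂ i, A i) = 1 := by
  rw [m_eq_one_iff_m_compl_eq_zero, compl_iInter]
  cases isEmpty_or_nonempty ι with
  | inl _ => rw [iUnion_of_empty, ν.m_empty]
  | inr _ =>
    obtain ⟨e, he⟩ := exists_surjective_nat ι
    rw [← he.iUnion_comp]
    exact ν.m_iUnion_eq_zero fun n => ν.m_eq_one_iff_m_compl_eq_zero.1 (h (e n))

theorem m_inter_eq_one {A B : Set Y} (hA : ν.m A = 1) (hB : ν.m B = 1) : ν.m (A ∩ B) = 1 := by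
  rw [inter_eq_iInter]
  exact ν.m_iInter_eq_one (Bool.forall_bool.2 ⟨hB, hA⟩)

theorem nonempty_of_m_eq_one {A : Set Y} (h : ν.m A = 1) : A.Nonempty :=
  nonempty_iff_ne_empty.2 fun hA => by simp [hA, ν.m_empty] at h

def map (g : Y → Z) : TotalMeasure Z where
  m S := ν.m (g ⁻¹' S)
  m_empty := ν.m_empty
  m_univ := ν.m_univ
  m_iUnion A hA := by
    rw [preimage_iUnion]
    exact ν.m_iUnion _ fun i j hij => (hA hij).preimage g

@[simp]
theorem map_m (g : Y → Z) (S : Set Z) : (ν.map g).m S = ν.m (g ⁻¹' S) := rfl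

def IsTwoValued : Prop := ∀ A : Set Y, ν.m A = 0 ∨ ν.m A = 1

def IsAdditiveBelow (κ : Cardinal.{u}) : Prop :=
  ∀ (ι : Type u) (A : ι → Set Y), #ι < κ → Pairwise (Function.onFun Disjoint A) →
    ν.m (⋃ i, A i) = ⨆ F : Finset ι, ∑ i ∈ F, ν.m (A i)

variable {ν}

theorem IsTwoValued.map (htv : ν.IsTwoValued) (g : Y → Z) : (ν.map g).IsTwoValued :=
  fun A => htv (g ⁻¹' A)

theorem IsTwoValued.m_setOf_mem_iff_eq_one (htv : ν.IsTwoValued) (A : Set Y) :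
    ν.m {y | y ∈ A ↔ ν.m A = 1} = 1 := by
  rcases htv A with hA | hA
  · convert ν.m_compl_eq_one hA using 2
    ext
    simp [hA]
  · simp [hA]

theorem IsTwoValued.exists_m_preimage_singleton_eq_one (htv : ν.IsTwoValued) (h : Y → ℝ) :
    ∃ c, ν.m (h ⁻¹' {c}) = 1 := by
  have hT : ν.m (⋂ q : ℚ, {y | y ∈ h ⁻¹' Iio (q : ℝ) ↔ ν.m (h ⁻¹' Iio (q : ℝ)) = 1}) = 1 :=
    ν.m_iInter_eq_one fun q => htv.m_setOf_mem_iff_eq_one _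
  obtain ⟨y₀, hy₀⟩ := ν.nonempty_of_m_eq_one hT
  refine ⟨h y₀, ν.m_eq_one_of_subset (fun y hy => ?_) hT⟩
  rw [mem_iInter] at hy hy₀
  exact eq_of_forall_lt_rat_iff_lt fun q => (hy q).trans (hy₀ q).symm

variable {κ : Cardinal.{u}}

theorem IsAdditiveBelow.map (hadd : ν.IsAdditiveBelow κ) (g : Y → Z) :
    (ν.map g).IsAdditiveBelow κ := by
  intro ι A hι hA
  simp only [map_m, preimage_iUnion]
  exact hadd ι _ hι fun i j hij => (hA hij).preimage g

theorem IsAdditiveBelow.m_iUnion_eq_zero (hadd : ν.IsAdditiveBelow κ) {ι : Type u}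
    {A : ι → Set Y} (hι : #ι < κ) (hA : Pairwise (Function.onFun Disjoint A))
    (h : ∀ i, ν.m (A i) = 0) : ν.m (⋃ i, A i) = 0 := by
  simp [hadd ι A hι hA, h]

theorem IsAdditiveBelow.m_eq_zero_of_mk_lt (hadd : ν.IsAdditiveBelow κ)
    (hsing : ∀ y, ν.m {y} = 0) {S : Set Y} (hS : #S < κ) : ν.m S = 0 := by
  rw [← iUnion_of_singleton_coe S]
  exact hadd.m_iUnion_eq_zero hS
    (fun i j hij => disjoint_singleton.2 (Subtype.coe_injective.ne hij)) fun i => hsing i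

theorem IsAdditiveBelow.exists_mem_m_preimage_singleton_eq_one (hadd : ν.IsAdditiveBelow κ)
    (htv : ν.IsTwoValued) {c : Y → Z} {S : Set Z} (hS : #S < κ) (h : ν.m (c ⁻¹' S) = 1) :
    ∃ z ∈ S, ν.m (c ⁻¹' {z}) = 1 := by
  by_contra! hne
  rw [← iUnion_of_singleton_coe S, preimage_iUnion, hadd.m_iUnion_eq_zero hS
    (fun i j hij => (disjoint_singleton.2 (Subtype.coe_injective.ne hij)).preimage c)
    fun z => (htv _).resolve_right (hne z z.2)] at h
  exact zero_ne_one h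

section Order

def IsUnbounded [Preorder Y] (ν : TotalMeasure Y) (g : Y → Y) : Prop :=
  ∀ γ, ν.m (g ⁻¹' {γ}) = 0 ∧ ν.m (g ⁻¹' Iio γ) = 0

def IsNormal [LT Y] (ν : TotalMeasure Y) : Prop :=
  ∀ A : Y → Set Y, (∀ α, ν.m (A α) = 1) → ν.m {β | ∀ α < β, β ∈ A α} = 1

theorem isUnbounded_id [Preorder Y] (hsing : ∀ y, ν.m {y} = 0) (hadd : ν.IsAdditiveBelow #Y)
    (hIio : ∀ y : Y, #(Iio y) < #Y) : ν.IsUnbounded id :=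
  fun γ => ⟨hsing γ, hadd.m_eq_zero_of_mk_lt hsing (hIio γ)⟩

theorem wellFounded_m_lt_eq_one [LT Y] [WellFoundedLT Y] (ν : TotalMeasure Y) :
    WellFounded fun h g : Y → Y => ν.m {y | h y < g y} = 1 := by
  refine wellFounded_iff_isEmpty_descending_chain.2 ⟨fun ⟨g, hg⟩ => ?_⟩
  obtain ⟨y, hy⟩ := ν.nonempty_of_m_eq_one (ν.m_iInter_eq_one hg)
  exact (wellFounded_iff_isEmpty_descending_chain.1 wellFounded_lt).false
    ⟨fun n => g n y, mem_iInter.1 hy⟩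

theorem IsTwoValued.map_pressing_down_of_minimal [Preorder Y] (htv : ν.IsTwoValued)
    (hadd : ν.IsAdditiveBelow #Y) (hIio : ∀ y : Y, #(Iio y) < #Y) {g : Y → Y}
    (hmin : ∀ h, ν.IsUnbounded h → ¬ν.m {y | h y < g y} = 1) {F : Y → Y}
    (hF : (ν.map g).m {x | F x < x} = 1) : ∃ γ, (ν.map g).m (F ⁻¹' {γ}) = 1 := by
  by_contra! hconst
  refine hmin (F ∘ g) (fun γ => ⟨(htv _).resolve_right (hconst γ),
    (htv _).resolve_right fun hγ => ?_⟩) hF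
  obtain ⟨z, -, hz⟩ := hadd.exists_mem_m_preimage_singleton_eq_one htv (hIio γ) hγ
  exact hconst z hz

theorem IsTwoValued.isNormal_of_pressing_down [LT Y] (htv : ν.IsTwoValued)
    (hpress : ∀ F : Y → Y, ν.m {x | F x < x} = 1 → ∃ γ, ν.m (F ⁻¹' {γ}) = 1) : ν.IsNormal := by
  intro A hA
  refine (htv _).resolve_left fun hD => ?_
  have hDc := ν.m_compl_eq_one hD
  have hbad : ∀ β ∈ {β | ∀ α < β, β ∈ A α}ᶜ, ∃ α < β, β ∉ A α := fun β hβ => by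
    simpa using hβ
  have : Nonempty Y := (ν.nonempty_of_m_eq_one hDc).to_subtype.map Subtype.val
  choose! F hFlt hFA using hbad
  obtain ⟨γ, hγ⟩ := hpress F (ν.m_eq_one_of_subset hFlt hDc)
  have hAc : ν.m (A γ)ᶜ = 1 := by
    refine ν.m_eq_one_of_subset (fun β hβ => ?_) (ν.m_inter_eq_one hγ hDc)
    obtain ⟨rfl : F β = γ, hβD⟩ := hβ
    exact hFA β hβD
  simp [ν.m_eq_one_iff_m_compl_eq_zero.1 (hA γ)] at hAc

theorem IsNormal.exists_homogeneous_of_card [LinearOrder Y] (hnorm : ν.IsNormal)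
    (htv : ν.IsTwoValued) (f : Finset Y → ℝ) (n : ℕ) :
    ∃ U, ν.m U = 1 ∧ ∃ C : ℝ, ∀ W : Finset Y, ↑W ⊆ U → W.card = n → f W = C := by
  induction n generalizing f with
  | zero => exact ⟨univ, ν.m_univ, f ∅, fun W _ hW => by rw [Finset.card_eq_zero.1 hW]⟩
  | succ n ih =>
    choose A hA C hC using fun α => ih fun W => f (insert α W)
    obtain ⟨C₀, hC₀⟩ := htv.exists_m_preimage_singleton_eq_one C
    refine ⟨C ⁻¹' {C₀} ∩ {β | ∀ α < β, β ∈ A α}, ν.m_inter_eq_one hC₀ (hnorm A hA), C₀,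
      fun W hWU hW => ?_⟩
    have hne : W.Nonempty := Finset.card_pos.1 (by omega)
    set α := W.min' hne
    have hαW : α ∈ W := W.min'_mem hne
    have hrest : ↑(W.erase α) ⊆ A α := fun β hβ =>
      (hWU (Finset.mem_of_mem_erase hβ)).2 α (W.min'_lt_of_mem_erase_min' hne hβ)
    rw [← Finset.insert_erase hαW, hC α _ hrest (by rw [Finset.card_erase_of_mem hαW, hW]; rfl)]
    exact (hWU hαW).1

theorem IsNormal.exists_homogeneous [LinearOrder Y] (hnorm : ν.IsNormal) (htv : ν.IsTwoValued)
    (f : Finset Y → ℝ) :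
    ∃ U, ν.m U = 1 ∧ ∀ n : ℕ, ∃ C : ℝ, ∀ W : Finset Y, ↑W ⊆ U → W.card = n → f W = C := by
  choose U hU C hC using hnorm.exists_homogeneous_of_card htv f
  exact ⟨⋂ n, U n, ν.m_iInter_eq_one hU,
    fun n => ⟨C n, fun W hW => hC n W (hW.trans (iInter_subset U n))⟩⟩

end Order

end TotalMeasure

/-- If the cardinality `κ = |X|` is two-valued measurable (there is a `{0,1}`-valued,
singleton-vanishing, `κ`-additive probability measure on `(X, 2^X)`), then there is such
a measure `μ` which is moreover *normal*: for every `f : [X]^{<ω} → ℝ` there is a set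
`U` of `μ`-measure one that is homogeneous for `f`. -/
theorem exists_homogeneous_two_valued_measure {X : Type u}
    (hex : ∃ μ₀ : TotalMeasure X,
      (∀ A : Set X, μ₀.m A = 0 ∨ μ₀.m A = 1) ∧
      (∀ x : X, μ₀.m {x} = 0) ∧
      (∀ (ι : Type u) (A : ι → Set X), Cardinal.mk ι < Cardinal.mk X →
        Pairwise (Function.onFun Disjoint A) →
        μ₀.m (⋃ i, A i) = ⨆ F : Finset ι, ∑ i ∈ F, μ₀.m (A i))) :
    ∃ μ : TotalMeasure X,
      (∀ A : Set X, μ.m A = 0 ∨ μ.m A = 1) ∧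
      (∀ x : X, μ.m {x} = 0) ∧
      (∀ (ι : Type u) (A : ι → Set X), Cardinal.mk ι < Cardinal.mk X →
        Pairwise (Function.onFun Disjoint A) →
        μ.m (⋃ i, A i) = ⨆ F : Finset ι, ∑ i ∈ F, μ.m (A i)) ∧
      (∀ f : Finset X → ℝ, ∃ U : Set X, μ.m U = 1 ∧
        ∀ n : ℕ, ∃ C : ℝ, ∀ W : Finset X, ↑W ⊆ U → W.card = n → f W = C) := by
  obtain ⟨μ₀, htv, hsing, hadd⟩ : ∃ μ₀ : TotalMeasure X,
      μ₀.IsTwoValued ∧ (∀ x, μ₀.m {x} = 0) ∧ μ₀.IsAdditiveBelow #X := hex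
  obtain ⟨_, _, hord⟩ := Cardinal.exists_ord_eq_type_lt X
  have hIio (x : X) : #(Iio x) < #X := Cardinal.mk_Iio_lt x hord
  obtain ⟨g, hg, hmin⟩ := μ₀.wellFounded_m_lt_eq_one.has_min {g | μ₀.IsUnbounded g}
    ⟨id, TotalMeasure.isUnbounded_id hsing hadd hIio⟩
  have hnorm : (μ₀.map g).IsNormal := (htv.map g).isNormal_of_pressing_down fun _ =>
    htv.map_pressing_down_of_minimal hadd hIio hmin
  exact ⟨μ₀.map g, htv.map g, fun x => (hg x).1, hadd.map g,
    hnorm.exists_homogeneous (htv.map g)⟩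
end

section
/- Every metric space (X, ρ) admits a strict total order ≺ on X such that the graph {(x, y) ∈ X × X : x ≺ y} is a Borel-measurable subset of X × X; in particular, every initial segment {y : y ≺ x} is Borel measurable in X. -/
/-!
Well-order `X`. For radii `s < r`, the pieces `P a = closedBall a s \ ⋃ b < a, ball b r`
(a construction from Stone's proof that metric spaces are paracompact) are closed and
`(r - s)`-separated, so every union of pieces, and of products of pieces, is closed. Sending
`x` to the index of the piece containing it (or `⊤`) is therefore a map into `WithTop X`
whose order relation `{(x, y) | code x < code y}` is Borel. Countably many pairs `(r, s)`
suffice to separate points, so the lexicographic order on the resulting injective codes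
`X → (ℕ → WithTop X)` is total, and its graph is a countable Boolean combination of the
Borel graphs above.
-/

open MeasureTheory Set Metric Function

theorem LocallyFinite.prod {ι ι' X Y : Type*} [TopologicalSpace X] [TopologicalSpace Y]
    {f : ι → Set X} {g : ι' → Set Y} (hf : LocallyFinite f) (hg : LocallyFinite g) :
    LocallyFinite fun p : ι × ι' => f p.1 ×ˢ g p.2 := by
  rintro ⟨x, y⟩
  obtain ⟨U, hU, hUf⟩ := hf x
  obtain ⟨V, hV, hVf⟩ := hg y
  refine ⟨U ×ˢ V, prod_mem_nhds hU hV, (hUf.prod hVf).subset ?_⟩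
  rintro ⟨i, j⟩ ⟨⟨a, b⟩, ⟨ha, hb⟩, hu, hv⟩
  exact ⟨⟨a, ha, hu⟩, ⟨b, hb, hv⟩⟩

theorem locallyFinite_of_forall_le_dist {ι Y : Type*} [PseudoMetricSpace Y] {f : ι → Set Y}
    {ε : ℝ} (hε : 0 < ε) (hf : Pairwise fun i j => ∀ x ∈ f i, ∀ y ∈ f j, ε ≤ dist x y) :
    LocallyFinite f := by
  intro x
  refine ⟨ball x (ε / 2), ball_mem_nhds x (half_pos hε), Set.Subsingleton.finite ?_⟩
  rintro i ⟨z, hzi, hz⟩ j ⟨w, hwj, hw⟩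
  by_contra hij
  have := hf hij z hzi w hwj
  have := dist_triangle_right z w x
  rw [mem_ball] at hz hw
  linarith

theorem measurableSet_lex_lt {γ ι : Type*} {β : ι → Type*} [LT ι] [Countable ι]
    [∀ i, LinearOrder (β i)] {m : MeasurableSpace γ} {u v : γ → ∀ i, β i}
    (huv : ∀ i, MeasurableSet {c | u c i < v c i})
    (hvu : ∀ i, MeasurableSet {c | v c i < u c i}) :
    MeasurableSet {c | toLex (u c) < toLex (v c)} := by
  have heq (i : ι) : MeasurableSet {c | u c i = v c i} := by
    have : {c | u c i = v c i} = ({c | u c i < v c i} ∪ {c | v c i < u c i})ᶜ := by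
      ext c
      simp [le_antisymm_iff, and_comm]
    rw [this]
    exact ((huv i).union (hvu i)).compl
  have : {c | toLex (u c) < toLex (v c)} =
      ⋃ i, (⋂ j, ⋂ (_ : j < i), {c | u c j = v c j}) ∩ {c | u c i < v c i} := by
    ext c
    simp only [mem_ofPred_eq, mem_iUnion, mem_inter_iff, mem_iInter]
    rfl
  rw [this]
  exact .iUnion fun i => (MeasurableSet.iInter fun j => .iInter fun _ => heq j).inter (huv i)

namespace BorelTotalOrder

section PseudoMetric

variable {X : Type*} [PseudoMetricSpace X] [LinearOrder X] {r s : ℝ} {a b x y : X}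

def stonePiece (r s : ℝ) (a : X) : Set X := closedBall a s \ ⋃ b < a, ball b r

theorem isClosed_stonePiece (r s : ℝ) (a : X) : IsClosed (stonePiece r s a) :=
  isClosed_closedBall.sdiff (isOpen_biUnion fun _ _ => isOpen_ball)

theorem sub_le_dist_of_mem_stonePiece_of_lt (hab : a < b) (hx : x ∈ stonePiece r s a)
    (hy : y ∈ stonePiece r s b) : r - s ≤ dist x y := by
  have hya : r ≤ dist y a := by
    by_contra h
    exact hy.2 (mem_biUnion hab (mem_ball.2 (not_le.1 h)))
  have hxa : dist x a ≤ s := hx.1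
  have := dist_triangle_left y a x
  linarith

theorem sub_le_dist_of_mem_stonePiece (hab : a ≠ b) (hx : x ∈ stonePiece r s a)
    (hy : y ∈ stonePiece r s b) : r - s ≤ dist x y := by
  rcases hab.lt_or_gt with h | h
  · exact sub_le_dist_of_mem_stonePiece_of_lt h hx hy
  · exact dist_comm x y ▸ sub_le_dist_of_mem_stonePiece_of_lt h hy hx

theorem eq_of_mem_stonePiece (hsr : s < r) (ha : x ∈ stonePiece r s a)
    (hb : x ∈ stonePiece r s b) : a = b := by
  by_contra hab
  have := sub_le_dist_of_mem_stonePiece hab ha hb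
  rw [dist_self] at this
  linarith

theorem locallyFinite_stonePiece (hsr : s < r) : LocallyFinite (stonePiece (X := X) r s) :=
  locallyFinite_of_forall_le_dist (sub_pos.2 hsr) fun _ _ hab _ hx _ hy =>
    sub_le_dist_of_mem_stonePiece hab hx hy

open Classical in
noncomputable def stoneIndex (r s : ℝ) (x : X) : WithTop X :=
  if h : ∃ a, x ∈ stonePiece r s a then h.choose else ⊤

theorem stoneIndex_eq_coe_iff (hsr : s < r) : stoneIndex r s x = a ↔ x ∈ stonePiece r s a := by
  unfold stoneIndex
  split_ifs with h
  · rw [WithTop.coe_inj]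
    exact ⟨fun ha => ha ▸ h.choose_spec, eq_of_mem_stonePiece hsr h.choose_spec⟩
  · exact ⟨fun h' => (WithTop.top_ne_coe h').elim, fun ha => (h ⟨a, ha⟩).elim⟩

theorem setOf_stoneIndex_lt (hsr : s < r) :
    {p : X × X | stoneIndex r s p.1 < stoneIndex r s p.2} =
      (⋃ ab : {ab : X × X // ab.1 < ab.2}, stonePiece r s ab.1.1 ×ˢ stonePiece r s ab.1.2) ∪
        (⋃ a, stonePiece r s a) ×ˢ (⋃ a, stonePiece r s a)ᶜ := by
  ext ⟨x, y⟩
  simp only [mem_ofPred_eq, mem_union, mem_iUnion, mem_prod, mem_compl_iff,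
    ← stoneIndex_eq_coe_iff hsr, Subtype.exists, Prod.exists, exists_prop, not_exists]
  induction stoneIndex r s x using WithTop.recTopCoe <;>
    induction stoneIndex r s y using WithTop.recTopCoe <;> simp

theorem measurableSet_stoneIndex_lt (hsr : s < r) :
    MeasurableSet[borel (X × X)] {p : X × X | stoneIndex r s p.1 < stoneIndex r s p.2} := by
  let _ : MeasurableSpace (X × X) := borel (X × X)
  have : BorelSpace (X × X) := ⟨rfl⟩
  have hP := locallyFinite_stonePiece (X := X) hsr
  have hU : IsClosed (⋃ a, stonePiece (X := X) r s a) :=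
    hP.isClosed_iUnion (isClosed_stonePiece r s)
  rw [setOf_stoneIndex_lt hsr, prod_eq]
  refine .union ?_ ?_
  · refine IsClosed.measurableSet <|
      ((hP.prod hP).comp_injective Subtype.val_injective).isClosed_iUnion fun _ => ?_
    exact (isClosed_stonePiece r s _).prod (isClosed_stonePiece r s _)
  · exact (hU.preimage continuous_fst).measurableSet.inter
      (hU.isOpen_compl.preimage continuous_snd).measurableSet

noncomputable def stoneCode (x : X) (k : ℕ) : WithTop X :=
  stoneIndex (1 / (k.unpair.1 + 1)) (1 / (k.unpair.1 + 1) - 1 / (k.unpair.2 + 1)) x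

theorem measurableSet_stoneCode_lt :
    MeasurableSet[borel (X × X)] {p : X × X | toLex (stoneCode p.1) < toLex (stoneCode p.2)} :=
  have h (k : ℕ) : MeasurableSet[borel (X × X)] {p : X × X | stoneCode p.1 k < stoneCode p.2 k} :=
    measurableSet_stoneIndex_lt (sub_lt_self _ Nat.one_div_pos_of_nat)
  measurableSet_lex_lt h fun k => continuous_swap.borel_measurable (h k)

theorem exists_mem_stonePiece [WellFoundedLT X] (x : X) (hr : 0 < r) :
    ∃ a, dist x a < r ∧ ∀ s, dist x a ≤ s → x ∈ stonePiece r s a := by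
  obtain ⟨a, ha, hmin⟩ := wellFounded_lt.has_min {b | dist x b < r} ⟨x, by simpa using hr⟩
  refine ⟨a, ha, fun s hs => ⟨mem_closedBall.2 hs, ?_⟩⟩
  simp only [mem_iUnion, mem_ball, not_exists]
  exact fun b hb hxb => hmin b hxb hb

theorem notMem_stonePiece_of_mem (hsr : s < r) (hx : x ∈ stonePiece r s a)
    (hxy : 2 * r ≤ dist x y) : y ∉ stonePiece r s a := fun hy => by
  have hxa : dist x a ≤ s := hx.1
  have hya : dist y a ≤ s := hy.1
  have := dist_triangle_right x y a
  linarith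

end PseudoMetric

theorem stoneCode_injective {X : Type*} [MetricSpace X] [LinearOrder X] [WellFoundedLT X] :
    Injective (stoneCode (X := X)) := by
  intro x y hxy
  by_contra hne
  obtain ⟨n, hn⟩ := exists_nat_one_div_lt (half_pos (dist_pos.2 hne))
  set r : ℝ := 1 / (n + 1)
  obtain ⟨a, hxa, hmem⟩ := exists_mem_stonePiece x (r := r) Nat.one_div_pos_of_nat
  obtain ⟨m, hm⟩ := exists_nat_one_div_lt (sub_pos.2 hxa)
  have hsr : r - 1 / (m + 1) < r := sub_lt_self _ Nat.one_div_pos_of_nat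
  have hx : x ∈ stonePiece r (r - 1 / (m + 1)) a := hmem _ (by linarith)
  have hy := notMem_stonePiece_of_mem (y := y) hsr hx (by linarith)
  have hcode := congrFun hxy (Nat.pair n m)
  simp only [stoneCode, Nat.unpair_pair] at hcode
  rw [(stoneIndex_eq_coe_iff hsr).2 hx, eq_comm, stoneIndex_eq_coe_iff hsr] at hcode
  exact hy hcode

end BorelTotalOrder

open BorelTotalOrder in
/-- Every metric space admits a strict total order whose graph is a Borel subset of
`X × X` (Borel for the product topology); in particular every initial segment
`{y : y ≺ x}` is a Borel subset of `X`. -/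
theorem exists_borel_total_order (X : Type*) [MetricSpace X] :
    ∃ lt : X → X → Prop,
      (∀ x, ¬ lt x x) ∧
      (∀ x y z, lt x y → lt y z → lt x z) ∧
      (∀ x y, x ≠ y → lt x y ∨ lt y x) ∧
      MeasurableSet[borel (X × X)] {p : X × X | lt p.1 p.2} ∧
      (∀ x : X, MeasurableSet[borel X] {y : X | lt y x}) := by
  obtain ⟨_, _⟩ := exists_wellFoundedLT X
  have hgraph := measurableSet_stoneCode_lt (X := X)
  refine ⟨fun x y => toLex (stoneCode x) < toLex (stoneCode y), fun _ => lt_irrefl _,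
    fun _ _ _ => lt_trans, fun _ _ hxy => lt_or_gt_of_ne ?_, hgraph,
    fun x => (continuous_id.prodMk continuous_const).borel_measurable hgraph⟩
  exact toLex.injective.ne (stoneCode_injective.ne hxy)
end

section
/- Let (X, B, μ) be a probability space, ε > 0, and let H_ε be a set of measurable functions X → {0,1} such that μ({x : g(x) ≠ h(x)}) ≥ ε for all distinct g, h ∈ H_ε. Let π be a probability measure on (H_ε, 2^{H_ε}) vanishing on singletons. Then for every countable set H of measurable functions X → {0,1}, π({ h' ∈ H_ε : inf_{h ∈ H} μ({x : h(x) ≠ h'(x)}) > ε/2 }) = 1. -/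
/-!
If `h'` is not farther than `ε / 2` from `H`, then for every `δ > 0` it lies within `ε / 2 + δ`
of some `h ∈ H`. For `δ` small enough, depending on `ε` only, such a ball around a measurable `h`
contains only finitely many points of `H_ε`, so the exceptional set is countable, hence `π`-null.

Finiteness is a packing argument. If `h'₁, …, h'ₙ ∈ H_ε` lie in the ball, the disagreement sets
`Tᵢ = {h ≠ h'ᵢ}` satisfy `{h'ᵢ ≠ h'ⱼ} = Tᵢ ∆ Tⱼ`, so `ε ≤ μ Tᵢ + μ Tⱼ - 2 μ (Tᵢ ∩ Tⱼ)`: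
the `Tᵢ` have measure at least `ε / 2 - δ` and pairwise overlaps at most `δ`. Removing from each
`Tᵢ` the others leaves disjoint sets, whence `n (ε / 2 - δ) ≤ 1 + n (n - 1) δ`, which fails for
`δ = ε / (4 n)` once `n ε > 4`.
-/

open MeasureTheory Finset
open scoped ENNReal symmDiff

universe u

namespace TotalMeasure

variable {Y : Type u} (π : TotalMeasure Y)

noncomputable def toMeasure : @Measure Y ⊤ :=
  @Measure.ofMeasurable Y ⊤ (fun s _ => π.m s) π.m_empty (fun A _ hd => π.m_iUnion A hd)

theorem toMeasure_apply (s : Set Y) : π.toMeasure s = π.m s :=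
  @Measure.ofMeasurable_apply Y ⊤ _ _ _ s MeasurableSpace.measurableSet_top

theorem m_eq_one_of_countable_compl (hπ : ∀ y, π.m {y} = 0) {s : Set Y}
    (hs : sᶜ.Countable) : π.m s = 1 := by
  let _ : MeasurableSpace Y := ⊤
  have : IsProbabilityMeasure π.toMeasure := ⟨by rw [toMeasure_apply, m_univ]⟩
  have : NullSingletonClass π.toMeasure := ⟨fun y => by rw [toMeasure_apply, hπ]⟩
  rw [← toMeasure_apply, ← prob_compl_eq_zero_iff MeasurableSpace.measurableSet_top]
  exact hs.measure_zero _

end TotalMeasure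

section Packing

variable {X ι : Type*} [MeasurableSpace X] {μ : Measure X}

theorem measureReal_symmDiff_add_two_mul_inter [IsFiniteMeasure μ] {s t : Set X}
    (hs : MeasurableSet s) (ht : MeasurableSet t) :
    μ.real (s ∆ t) + 2 * μ.real (s ∩ t) = μ.real s + μ.real t := by
  rw [measureReal_symmDiff_eq hs ht, ← measureReal_sdiff_add_inter (s := s) ht,
    ← measureReal_sdiff_add_inter (s := t) hs, Set.inter_comm t s]
  ring

theorem sum_measureReal_le_measureReal_univ_add_sum_inter [IsFiniteMeasure μ] [DecidableEq ι]
    (s : Finset ι) {T : ι → Set X} (hT : ∀ i ∈ s, MeasurableSet (T i)) :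
    ∑ i ∈ s, μ.real (T i) ≤
      μ.real Set.univ + ∑ i ∈ s, ∑ j ∈ s.erase i, μ.real (T i ∩ T j) := by
  set D : ι → Set X := fun i => T i \ ⋃ j ∈ s.erase i, T j
  have hD : ∀ i ∈ s, MeasurableSet (D i) := fun i hi =>
    (hT i hi).diff ((s.erase i).measurableSet_biUnion fun j hj => hT j (mem_of_mem_erase hj))
  have hdisj : (s : Set ι).PairwiseDisjoint D := fun i hi j _ hij =>
    Set.disjoint_left.2 fun _ hxi hxj => hxj.2 (Set.mem_biUnion (mem_erase.2 ⟨hij, hi⟩) hxi.1)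
  have hcover : ∀ i ∈ s, μ.real (T i) ≤ μ.real (D i) + ∑ j ∈ s.erase i, μ.real (T i ∩ T j) :=
    fun i _ => calc
      μ.real (T i) = μ.real (D i ∪ ⋃ j ∈ s.erase i, T i ∩ T j) := by
        rw [← Set.inter_iUnion₂, Set.sdiff_union_inter]
      _ ≤ μ.real (D i) + μ.real (⋃ j ∈ s.erase i, T i ∩ T j) := measureReal_union_le _ _
      _ ≤ μ.real (D i) + ∑ j ∈ s.erase i, μ.real (T i ∩ T j) := by
        gcongr; exact measureReal_biUnion_finset_le _ _
  calc ∑ i ∈ s, μ.real (T i)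
      ≤ ∑ i ∈ s, (μ.real (D i) + ∑ j ∈ s.erase i, μ.real (T i ∩ T j)) := sum_le_sum hcover
    _ = ∑ i ∈ s, μ.real (D i) + ∑ i ∈ s, ∑ j ∈ s.erase i, μ.real (T i ∩ T j) := sum_add_distrib
    _ ≤ _ := by gcongr; exact sum_measureReal_le_measureReal_univ hD hdisj

end Packing

section Classifiers

variable {X : Type*}

theorem setOf_ne_eq_symmDiff (k g h : X → Bool) :
    {x | g x ≠ h x} = {x | k x ≠ g x} ∆ {x | k x ≠ h x} := by
  ext x
  simp only [Set.mem_ofPred_eq, Set.mem_symmDiff]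
  cases g x <;> cases h x <;> cases k x <;> decide

variable [MeasurableSpace X] {μ : Measure X}

theorem measurableSet_setOf_ne {g h : X → Bool} (hg : Measurable g) (hh : Measurable h) :
    MeasurableSet {x | g x ≠ h x} :=
  (measurableSet_eq_fun hg hh).compl

theorem measureReal_ne_add_two_mul_inter [IsFiniteMeasure μ] {k g h : X → Bool}
    (hk : Measurable k) (hg : Measurable g) (hh : Measurable h) :
    μ.real {x | g x ≠ h x} + 2 * μ.real ({x | k x ≠ g x} ∩ {x | k x ≠ h x}) =
      μ.real {x | k x ≠ g x} + μ.real {x | k x ≠ h x} := by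
  rw [setOf_ne_eq_symmDiff k]
  exact measureReal_symmDiff_add_two_mul_inter (measurableSet_setOf_ne hk hg)
    (measurableSet_setOf_ne hk hh)

variable [IsProbabilityMeasure μ] {ε δ : ℝ} {Hε : Set (X → Bool)}

theorem card_mul_le_of_subset_ball (hHmeas : ∀ g ∈ Hε, Measurable g)
    (hsep : ∀ g ∈ Hε, ∀ h ∈ Hε, g ≠ h → ε ≤ μ.real {x | g x ≠ h x})
    {k : X → Bool} (hk : Measurable k) {t : Finset (X → Bool)} (htH : ↑t ⊆ Hε)
    (htk : ∀ h ∈ t, μ.real {x | k x ≠ h x} ≤ ε / 2 + δ) (ht : 2 ≤ #t) :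
    #t * (ε / 2 - δ) ≤ 1 + #t * (#t - 1) * δ := by
  classical
  set T : (X → Bool) → Set X := fun h => {x | k x ≠ h x}
  have hpair : ∀ g ∈ t, ∀ h ∈ t, g ≠ h →
      μ.real (T g ∩ T h) ≤ δ ∧ ε / 2 - δ ≤ μ.real (T g) := fun g hg h hh hgh => by
    have hsum :=
      measureReal_ne_add_two_mul_inter (μ := μ) hk (hHmeas g (htH hg)) (hHmeas h (htH hh))
    have hfar := hsep g (htH hg) h (htH hh) hgh
    have hg_close := htk g hg
    have hh_close := htk h hh
    have hinter : 0 ≤ μ.real (T g ∩ T h) := measureReal_nonneg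
    constructor <;> linarith
  have hlow : ∀ g ∈ t, ε / 2 - δ ≤ μ.real (T g) := fun g hg => by
    obtain ⟨h, hh, hhg⟩ := t.exists_mem_ne ht g
    exact (hpair g hg h hh (Ne.symm hhg)).2
  calc #t * (ε / 2 - δ) = ∑ _g ∈ t, (ε / 2 - δ) := by rw [sum_const, nsmul_eq_mul]
    _ ≤ ∑ g ∈ t, μ.real (T g) := sum_le_sum hlow
    _ ≤ μ.real Set.univ + ∑ g ∈ t, ∑ h ∈ t.erase g, μ.real (T g ∩ T h) :=
      sum_measureReal_le_measureReal_univ_add_sum_inter t fun g hg =>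
        measurableSet_setOf_ne hk (hHmeas g (htH hg))
    _ ≤ 1 + ∑ g ∈ t, ∑ _h ∈ t.erase g, δ := by
      rw [probReal_univ]
      gcongr with g hg h hh
      exact (hpair g hg h (mem_of_mem_erase hh) (ne_of_mem_erase hh).symm).1
    _ = 1 + #t * (#t - 1) * δ := by
      rw [sum_congr rfl fun g hg => by rw [sum_const, nsmul_eq_mul, cast_card_erase_of_mem hg],
        sum_const, nsmul_eq_mul, mul_assoc]

theorem exists_pos_finite_setOf_measure_ne_le (hε : 0 < ε)
    (hHmeas : ∀ g ∈ Hε, Measurable g)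
    (hsep : ∀ g ∈ Hε, ∀ h ∈ Hε, g ≠ h → ENNReal.ofReal ε ≤ μ {x | g x ≠ h x}) :
    ∃ δ > 0, ∀ k : X → Bool, Measurable k →
      {h ∈ Hε | μ {x | k x ≠ h x} ≤ ENNReal.ofReal (ε / 2 + δ)}.Finite := by
  obtain ⟨n, hn⟩ := exists_nat_gt (max 2 (4 / ε))
  have hn2 : (2 : ℝ) ≤ n := (le_max_left _ _).trans hn.le
  have hnε : 4 < n * ε := (div_lt_iff₀ hε).1 ((le_max_right _ _).trans_lt hn)
  refine ⟨ε / (4 * n), by positivity, fun k hk => ?_⟩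
  by_contra hinf
  obtain ⟨t, htB, rfl⟩ := Set.Infinite.exists_subset_card_eq hinf n
  have hsep' : ∀ g ∈ Hε, ∀ h ∈ Hε, g ≠ h → ε ≤ μ.real {x | g x ≠ h x} :=
    fun g hg h hh hgh =>
      (ENNReal.ofReal_le_iff_le_toReal (measure_ne_top _ _)).1 (hsep g hg h hh hgh)
  have key := card_mul_le_of_subset_ball hHmeas hsep' hk (fun h hh => (htB hh).1)
    (fun h hh => ENNReal.toReal_le_of_le_ofReal (by positivity) (htB hh).2) (by exact_mod_cast hn2)
  have hδ : (#t : ℝ) * (ε / (4 * #t)) = ε / 4 := by field_simp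
  have hδ' : (#t : ℝ) * (#t - 1) * (ε / (4 * #t)) = (#t - 1) * (ε / 4) := by
    rw [← hδ]; ring
  linarith

end Classifiers

/-- Let `(X, B, μ)` be a probability space, `ε > 0`, and `H_ε` an `ε`-separated family
of measurable classifiers. If `π` is a probability measure on all subsets of `H_ε`
vanishing on singletons, then for every countable set `H` of measurable classifiers,
`π`-almost every `h' ∈ H_ε` has `inf_{h ∈ H} μ({h ≠ h'}) > ε/2`. -/
theorem pi_full_measure_far_from_countable {X : Type u} [MeasurableSpace X]
    (μ : Measure X) [IsProbabilityMeasure μ]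
    (ε : ℝ) (hε : 0 < ε) (Hε : Set (X → Bool))
    (hHmeas : ∀ g ∈ Hε, Measurable g)
    (hsep : ∀ g ∈ Hε, ∀ h ∈ Hε, g ≠ h → ENNReal.ofReal ε ≤ μ {x | g x ≠ h x})
    (π : TotalMeasure Hε) (hπ : ∀ h : Hε, π.m {h} = 0) :
    ∀ H : Set (X → Bool), H.Countable → (∀ h ∈ H, Measurable h) →
      π.m {h' : Hε | ENNReal.ofReal (ε / 2) <
        ⨅ h : H, μ {x | (h : X → Bool) x ≠ (h' : X → Bool) x}} = 1 := by
  intro H hH hHm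
  obtain ⟨δ, hδ, hfin⟩ := exists_pos_finite_setOf_measure_ne_le hε hHmeas hsep
  refine π.m_eq_one_of_countable_compl hπ <| (hH.biUnion fun k hk =>
    ((hfin k (hHm k hk)).countable.preimage Subtype.val_injective)).mono fun h' hh' => ?_
  rw [Set.mem_compl_iff, Set.mem_ofPred_eq, not_lt] at hh'
  have hlt : ENNReal.ofReal (ε / 2) < ENNReal.ofReal (ε / 2 + δ) :=
    (ENNReal.ofReal_lt_ofReal_iff (by positivity)).2 (by linarith)
  obtain ⟨⟨k, hk⟩, hkh'⟩ := iInf_lt_iff.1 (hh'.trans_lt hlt)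
  exact Set.mem_biUnion hk ⟨h'.2, hkh'.le⟩
end

section
/- Let μ be a probability measure on a measurable space (X, B) and let {A_1, A_2, …} be a countable measurable partition of X. For X_1, …, X_n drawn i.i.d. from μ, let U_n = |{ i : A_i ∩ {X_1, …, X_n} ≠ ∅ }| be the number of cells occupied by the sample. Then E[U_n] = o(n), i.e., E[U_n]/n → 0 as n → ∞. -/
open MeasureTheory Filter
open scoped ENNReal

/-! The expected number of occupied cells is `∑ᵢ P(cell i is hit)`, and by the union bound
`P(cell i is hit) ≤ min 1 (n μ(Aᵢ))`. After dividing by `n`, the `i`-th term is at most `μ(Aᵢ)`,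
which is summable because the cells are disjoint, and at most `1/n`, so it tends to `0`;
dominated convergence for series concludes. -/

theorem ENNReal.tendsto_tsum_of_dominated_convergence {ι : Type*} [Countable ι]
    {F : ℕ → ι → ℝ≥0∞} {f bound : ι → ℝ≥0∞} (h_bound : ∀ n i, F n i ≤ bound i)
    (h_fin : ∑' i, bound i ≠ ∞) (h_lim : ∀ i, Tendsto (F · i) atTop (nhds (f i))) :
    Tendsto (fun n => ∑' i, F n i) atTop (nhds (∑' i, f i)) := by
  let _ : MeasurableSpace ι := ⊤
  simp_rw [← lintegral_count' .of_discrete]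
  exact tendsto_lintegral_of_dominated_convergence bound (fun _ => .of_discrete)
    (fun n => ae_of_all _ (h_bound n)) (by rwa [lintegral_count' .of_discrete])
    (ae_of_all _ h_lim)

/-- Not an equality in general: `ncard` is `0` on infinite sets. -/
theorem Set.ncard_le_tsum_indicator_one {ι : Type*} (s : Set ι) :
    (s.ncard : ℝ≥0∞) ≤ ∑' i, s.indicator 1 i := by
  rw [← tsum_subtype, Pi.one_def, ENNReal.tsum_set_one, Set.ncard_def]
  exact_mod_cast ENat.natCast_toNat_le_self s.encard

theorem MeasureTheory.lintegral_ncard_le_tsum {α ι : Type*} [Countable ι] [MeasurableSpace α]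
    (ν : Measure α) {B : ι → Set α} (hB : ∀ i, MeasurableSet (B i)) :
    ∫⁻ ω, ({i | ω ∈ B i}.ncard : ℝ≥0∞) ∂ν ≤ ∑' i, ν (B i) :=
  calc ∫⁻ ω, ({i | ω ∈ B i}.ncard : ℝ≥0∞) ∂ν
      ≤ ∫⁻ ω, ∑' i, (B i).indicator 1 ω ∂ν :=
        lintegral_mono fun ω => {i | ω ∈ B i}.ncard_le_tsum_indicator_one
    _ = ∑' i, ν (B i) := by
        rw [lintegral_tsum fun i => (measurable_one.indicator (hB i)).aemeasurable]
        simp_rw [lintegral_indicator_one (hB _)]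

theorem MeasureTheory.Measure.pi_exists_mem_le_sum {ι : Type*} [Fintype ι] {α : ι → Type*}
    [∀ k, MeasurableSpace (α k)] (μ : ∀ k, Measure (α k)) [∀ k, IsProbabilityMeasure (μ k)]
    (s : ∀ k, Set (α k)) :
    Measure.pi μ {ω | ∃ k, ω k ∈ s k} ≤ ∑ k, μ k (s k) := by
  have h_coord (k : ι) : Measure.pi μ (Function.eval k ⁻¹' s k) ≤ μ k (s k) :=
    (le_map_apply (measurable_pi_apply k).aemeasurable _).trans_eq
      (by rw [(measurePreserving_eval μ k).map_eq])
  calc Measure.pi μ {ω | ∃ k, ω k ∈ s k}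
      = Measure.pi μ (⋃ k, Function.eval k ⁻¹' s k) := by congr 1; ext; simp
    _ ≤ ∑ k, μ k (s k) :=
        (measure_iUnion_fintype_le _ _).trans (Finset.sum_le_sum fun k _ => h_coord k)

theorem expected_occupied_cells_sublinear_general {X : Type*} [MeasurableSpace X]
    (μ : Measure X) [IsProbabilityMeasure μ]
    (A : ℕ → Set X) (hAm : ∀ i, MeasurableSet (A i))
    (hdisj : Pairwise (Function.onFun Disjoint A)) :
    Tendsto (fun n : ℕ =>
        (∫⁻ ω : Fin n → X,
          (Set.ncard {i : ℕ | ∃ k, ω k ∈ A i} : ℝ≥0∞) ∂(Measure.pi fun _ : Fin n => μ))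
          / (n : ℝ≥0∞))
      atTop (nhds 0) := by
  set hit : ℕ → ℕ → ℝ≥0∞ := fun n i =>
    Measure.pi (fun _ : Fin n => μ) {ω | ∃ k, ω k ∈ A i}
  have h_hit_le (n i : ℕ) : hit n i ≤ n * μ (A i) := by
    simpa using Measure.pi_exists_mem_le_sum (fun _ : Fin n => μ) (fun _ => A i)
  have h_meas (n i : ℕ) : MeasurableSet {ω : Fin n → X | ∃ k, ω k ∈ A i} := by
    rw [Set.ofPred_exists]
    exact .iUnion fun k => measurable_pi_apply k (hAm i)
  have h_sum : ∑' i, μ (A i) ≠ ∞ := by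
    rw [← measure_iUnion hdisj hAm]; exact measure_ne_top _ _
  have h_lim : Tendsto (fun n => ∑' i, hit n i / n) atTop (nhds 0) := by
    have h_cell (i : ℕ) : Tendsto (fun n : ℕ => hit n i / n) atTop (nhds 0) :=
      tendsto_of_tendsto_of_tendsto_of_le_of_le tendsto_const_nhds
        ENNReal.tendsto_inv_nat_nhds_zero (fun _ => zero_le)
        fun n => (ENNReal.div_le_div_right prob_le_one _).trans_eq (one_div _)
    simpa using ENNReal.tendsto_tsum_of_dominated_convergence
      (fun n i => ENNReal.div_le_of_le_mul ((h_hit_le n i).trans_eq (mul_comm _ _))) h_sum h_cell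
  refine tendsto_of_tendsto_of_tendsto_of_le_of_le tendsto_const_nhds h_lim
    (fun _ => zero_le) fun n => ?_
  calc _ ≤ (∑' i, hit n i) / n := by
        gcongr
        exact lintegral_ncard_le_tsum _ (h_meas n)
    _ = ∑' i, hit n i / n := by simp_rw [div_eq_mul_inv, ENNReal.tsum_mul_right]

/-- For a countable measurable partition `{A_i}` of a probability space and an i.i.d.
sample `X_1, …, X_n ∼ μ`, the expected number `E[U_n]` of cells occupied by the sample
is `o(n)`. -/
theorem expected_occupied_cells_sublinear {X : Type*} [MeasurableSpace X]
    (μ : Measure X) [IsProbabilityMeasure μ]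
    (A : ℕ → Set X) (hAm : ∀ i, MeasurableSet (A i))
    (hdisj : Pairwise (Function.onFun Disjoint A)) (hcover : (⋃ i, A i) = Set.univ) :
    Tendsto (fun n : ℕ =>
        (∫⁻ ω : Fin n → X,
          (Set.ncard {i : ℕ | ∃ k, ω k ∈ A i} : ℝ≥0∞) ∂(Measure.pi fun _ : Fin n => μ))
          / (n : ℝ≥0∞))
      atTop (nhds 0) :=
  expected_occupied_cells_sublinear_general μ A hAm hdisj
end
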